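/- arXiv:1110.1456 — 5 statements merged into one kernel-verified Lean document; each statement's English description precedes it below -/
import Mathlib

section
/- For a univariate rational function r(x) = x^n p(x)/q(x), where p and q are coprime polynomials with p(0) ≠ 0 and q(0) ≠ 0 and n ∈ ℤ, the degree defined via valuations satisfies deg(r) = max(-n, n + deg(p) - deg(q)), where deg(p), deg(q) denote the usual polynomial degrees. -/
/-!
For `ε > 0` every weight `ε * k` on the support of a polynomial with nonzero constant term is
at least the weight `0` of its constant term, while for `ε < 0` the smallest weight sits at the
leading term, `ε * deg`. Hence `deg_ε(r) / |ε|` takes only the two values `m` (for `ε > 0`) and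
`-(m + deg P - deg Q)` (for `ε < 0`).
-/

/-- The minimal weight `min_{k ∈ supp f} ε * k` of a univariate polynomial `f`.  For a
polynomial `f` with `f(0) ≠ 0`, this is the valuation in `p` of the expansion of
`f(p^ε x)` as a series in `p` with polynomial coefficients (the coefficients
`a_k p^{εk} x^k` involve distinct powers of `x`, so no cancellation occurs). -/
noncomputable def pValEps (ε : ℝ) (f : Polynomial ℂ) : ℝ :=
  if h : f.support.Nonempty then f.support.inf' h (fun k => ε * (k : ℝ)) else 0

section pValEps

variable {ε : ℝ} {f : Polynomial ℂ}

lemma pValEps_of_nonneg (hε : 0 ≤ ε) (hf : f.eval 0 ≠ 0) : pValEps ε f = 0 := by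
  have h0 : 0 ∈ f.support := by
    rwa [Polynomial.mem_support_iff, Polynomial.coeff_zero_eq_eval_zero]
  rw [pValEps, dif_pos ⟨0, h0⟩]
  refine le_antisymm ((Finset.inf'_le _ h0).trans (by simp)) (Finset.le_inf' _ _ fun k _ => ?_)
  positivity

lemma pValEps_of_nonpos (hε : ε ≤ 0) (hf : f ≠ 0) : pValEps ε f = ε * f.natDegree := by
  have hd : f.natDegree ∈ f.support := Polynomial.natDegree_mem_support_of_nonzero hf
  rw [pValEps, dif_pos ⟨_, hd⟩]
  refine le_antisymm (Finset.inf'_le _ hd) (Finset.le_inf' _ _ fun k hk => ?_)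
  have hk : (k : ℝ) ≤ f.natDegree := by exact_mod_cast Polynomial.le_natDegree_of_mem_supp k hk
  exact mul_le_mul_of_nonpos_left hk hε

end pValEps

section normalized

variable (m : ℤ) {P Q : Polynomial ℂ} {ε : ℝ}

lemma normalized_valuation_of_pos (hε : 0 < ε) (hP0 : P.eval 0 ≠ 0) (hQ0 : Q.eval 0 ≠ 0) :
    (ε * m + pValEps ε P - pValEps ε Q) / |ε| = m := by
  rw [pValEps_of_nonneg hε.le hP0, pValEps_of_nonneg hε.le hQ0, abs_of_pos hε, add_zero, sub_zero,
    mul_div_cancel_left₀ _ hε.ne']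

lemma normalized_valuation_of_neg (hε : ε < 0) (hP : P ≠ 0) (hQ : Q ≠ 0) :
    (ε * m + pValEps ε P - pValEps ε Q) / |ε| = -((m : ℝ) + P.natDegree - Q.natDegree) := by
  rw [pValEps_of_nonpos hε.le hP, pValEps_of_nonpos hε.le hQ, abs_of_neg hε]
  field_simp [hε.ne]

lemma setOf_normalized_valuation_eq_pair (hP : P ≠ 0) (hQ : Q ≠ 0) (hP0 : P.eval 0 ≠ 0)
    (hQ0 : Q.eval 0 ≠ 0) :
    {d : ℝ | ∃ ε : ℝ, ε ≠ 0 ∧ d = (ε * m + pValEps ε P - pValEps ε Q) / |ε|} =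
      {(m : ℝ), -((m : ℝ) + P.natDegree - Q.natDegree)} := by
  ext d
  constructor
  · rintro ⟨ε, hε, rfl⟩
    rcases hε.lt_or_gt with hneg | hpos
    · exact Or.inr (normalized_valuation_of_neg m hneg hP hQ)
    · exact Or.inl (normalized_valuation_of_pos m hpos hP0 hQ0)
  · rintro (rfl | rfl)
    · exact ⟨1, one_ne_zero, (normalized_valuation_of_pos m one_pos hP0 hQ0).symm⟩
    · exact ⟨-1, by norm_num, (normalized_valuation_of_neg m (by norm_num) hP hQ).symm⟩

end normalized

theorem rational_degree_formula_general (m : ℤ) (P Q : Polynomial ℂ) (hP : P ≠ 0) (hQ : Q ≠ 0)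
    (hP0 : P.eval 0 ≠ 0) (hQ0 : Q.eval 0 ≠ 0) :
    -sInf {d : ℝ | ∃ ε : ℝ, ε ≠ 0 ∧
        d = (ε * (m : ℝ) + pValEps ε P - pValEps ε Q) / |ε|}
      = max (-(m : ℝ)) ((m : ℝ) + (P.natDegree : ℝ) - (Q.natDegree : ℝ)) := by
  rw [setOf_normalized_valuation_eq_pair m hP hQ hP0 hQ0, csInf_pair, ← max_neg_neg,
    neg_neg]

/-- For a univariate rational function `r(x) = x^m · P(x)/Q(x)` with `P, Q` coprime
polynomials, `P(0) ≠ 0 ≠ Q(0)` and `m ∈ ℤ`, the valuation of `r(p^ε x)` in `p` is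
`deg_ε(r) = ε·m + pValEps ε P - pValEps ε Q`, and the degree
`deg(r) = -inf_{ε ≠ 0} deg_ε(r)/|ε|` equals `max(-m, m + deg P - deg Q)`,
with `deg P`, `deg Q` the usual polynomial degrees. -/
theorem rational_degree_formula (m : ℤ) (P Q : Polynomial ℂ) (hP : P ≠ 0) (hQ : Q ≠ 0)
    (hcop : IsCoprime P Q) (hP0 : P.eval 0 ≠ 0) (hQ0 : Q.eval 0 ≠ 0) :
    -sInf {d : ℝ | ∃ ε : ℝ, ε ≠ 0 ∧
        d = (ε * (m : ℝ) + pValEps ε P - pValEps ε Q) / |ε|}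
      = max (-(m : ℝ)) ((m : ℝ) + (P.natDegree : ℝ) - (Q.natDegree : ℝ)) :=
  rational_degree_formula_general m P Q hP hQ hP0 hQ0
end

section
/- For f = ∑_{t∈T} a_t p^t ∈ R(x) with degree-growth constant C, and any ε ∈ ℝ^n with ‖ε‖·C < 1 and any t ∈ T with t ≠ val(f), one has val(a_t(p^ε x) p^t) ≥ t - ‖ε‖(t - val(f))·C; consequently the substituted series f(p^ε x) is a well-defined element of F(x). -/
noncomputable section
open Classical

/-- Multivariate polynomials in `n` variables over `ℂ`. -/
abbrev MvP (n : ℕ) := MvPolynomial (Fin n) ℂ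

/-- The field of rational functions in `n` variables over `ℂ`. -/
abbrev KK (n : ℕ) := FractionRing (MvP n)

/-- The minimal `ε`-weight `min_{m ∈ supp f} ∑ i, ε i * m i` of a multivariate
polynomial: the `p`-adic valuation of `f(p^{ε₁}x₁, …, p^{εₙ}xₙ)`. -/
def mvValEps (n : ℕ) (ε : Fin n → ℝ) (f : MvP n) : ℝ :=
  if h : f.support.Nonempty then f.support.inf' h (fun m => ∑ i, ε i * (m i : ℝ)) else 0

/-- `deg_ε(r)` for a rational function `r`: the `p`-adic valuation of
`r(p^{ε₁}x₁, …, p^{εₙ}xₙ)`, computed from a fraction representation of `r`. -/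
def degEps (n : ℕ) (ε : Fin n → ℝ) (r : KK n) : ℝ :=
  mvValEps n ε (IsLocalization.sec (nonZeroDivisors (MvP n)) r).1
  - mvValEps n ε ((IsLocalization.sec (nonZeroDivisors (MvP n)) r).2 : MvP n)

/-- The degree `deg(r) = -inf_{ε ≠ 0} deg_ε(r)/‖ε‖` of a rational function, with
`‖·‖` the supremum norm on `Fin n → ℝ`. -/
def degK (n : ℕ) (r : KK n) : ℝ :=
  -sInf {d : ℝ | ∃ ε : Fin n → ℝ, ε ≠ 0 ∧ d = degEps n ε r / ‖ε‖}

/-- Membership in `F(x)`: a Hahn series over `ℝ` with rational-function coefficients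
whose exponent set is discrete and bounded below, i.e. only finitely many exponents lie
below any given real number. -/
def FiniteBelow (n : ℕ) (f : HahnSeries ℝ (KK n)) : Prop :=
  ∀ r : ℝ, {t ∈ f.support | t ≤ r}.Finite

/-- Membership in `R(x) ⊂ F(x)`: the coefficients satisfy the degree-growth bound
`deg(a_t) ≤ C (t - val f)` for all exponents `t > val f`, for some constant `C`. -/
def InR (n : ℕ) (f : HahnSeries ℝ (KK n)) : Prop :=
  FiniteBelow n f ∧
    ∃ C : ℝ, ∀ t ∈ f.support, t ≠ f.order → degK n (f.coeff t) ≤ C * (t - f.order)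

/-- The substitution `f(p^{ε₁}x₁, …, p^{εₙ}xₙ)` of a polynomial `f`, as a Hahn series
in `p` with rational-function coefficients. -/
def polySubst (n : ℕ) (ε : Fin n → ℝ) (f : MvP n) : HahnSeries ℝ (KK n) :=
  ∑ m ∈ f.support, HahnSeries.single (∑ i, ε i * (m i : ℝ))
    (algebraMap (MvP n) (KK n) (MvPolynomial.monomial m (MvPolynomial.coeff m f)))

/-- The substitution `r(p^{ε₁}x₁, …, p^{εₙ}xₙ)` of a rational function `r`, as an
element of the field of Hahn series in `p` with rational-function coefficients. -/
def ratSubst (n : ℕ) (ε : Fin n → ℝ) (r : KK n) : HahnSeries ℝ (KK n) :=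
  polySubst n ε (IsLocalization.sec (nonZeroDivisors (MvP n)) r).1
  / polySubst n ε ((IsLocalization.sec (nonZeroDivisors (MvP n)) r).2 : MvP n)

/-- The substitution `f(p^{ε₁}x₁, …, p^{εₙ}xₙ)` of a series `f = ∑_t a_t p^t`: the
series `∑_t a_t(p^ε x) p^t` re-expanded in `p`, characterized coefficientwise by
`coeff s = ∑_t (a_t(p^ε x)).coeff (s - t)`; junk value `0` when no such Hahn series
exists. -/
def serSubst (n : ℕ) (ε : Fin n → ℝ) (f : HahnSeries ℝ (KK n)) : HahnSeries ℝ (KK n) :=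
  if h : ∃ g : HahnSeries ℝ (KK n),
      ∀ s : ℝ, g.coeff s = ∑ᶠ t : ℝ, (ratSubst n ε (f.coeff t)).coeff (s - t)
  then h.choose else 0

/-!
Substituting `p^ε x` into a rational function `r` yields a Hahn series of order
`deg_ε(r) ≥ -‖ε‖ deg(r)`, so the growth condition `deg(a_t) ≤ C (t - val f)` gives
`val(a_t(p^ε x) p^t) ≥ (1 - ‖ε‖C) t + ‖ε‖C val f` for `t ≠ val f`. As `‖ε‖C < 1` and the
exponents of `f` are discrete and bounded below, only finitely many terms `a_t(p^ε x) p^t`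
reach below any given valuation. Hence every coefficient of the re-expansion is a finite sum,
and the union of the supports of these terms is well-founded, so they form a summable family.
-/

namespace Set

theorem isWF_of_forall_inter_Iic {α : Type*} [Preorder α] {s : Set α}
    (h : ∀ r, (s ∩ Iic r).IsWF) : s.IsWF := by
  rw [isWF_iff_no_descending_seq]
  intro σ hσ hmem
  exact isWF_iff_no_descending_seq.1 (h (σ 0)) σ hσ
    fun k => ⟨hmem k, hσ.antitone k.zero_le⟩

end Set

namespace HahnSeries

variable {Γ R : Type*} [AddCommGroup Γ] [LinearOrder Γ] [IsOrderedAddMonoid Γ] [Semiring R]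

theorem finite_support_coeff_sub {x : Γ → HahnSeries Γ R}
    (hx : ∀ r, {t | x t ≠ 0 ∧ t + (x t).order ≤ r}.Finite) (s : Γ) :
    (Function.support fun t => (x t).coeff (s - t)).Finite :=
  (hx s).subset fun _ ht =>
    ⟨ne_zero_of_coeff_ne_zero ht, le_sub_iff_add_le'.1 (order_le_of_coeff_ne_zero ht)⟩

namespace SummableFamily

def shift (x : Γ → HahnSeries Γ R)
    (hx : ∀ r, {t | x t ≠ 0 ∧ t + (x t).order ≤ r}.Finite) : SummableFamily Γ R Γ where
  toFun t := HahnSeries.single t 1 * x t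
  isPWO_iUnion_support' := by
    -- below `r`, only the terms indexed by the finite set `hx r` have support
    refine (Set.isWF_of_forall_inter_Iic fun r => ?_).isPWO
    refine ((Finset.isWF_sup (hx r).toFinset
      (f := fun t => (HahnSeries.single t 1 * x t).support)).2 fun t _ => isWF_support _).mono ?_
    rintro s ⟨hs, hsr⟩
    obtain ⟨t, hst⟩ := Set.mem_iUnion.1 hs
    rw [mem_support, coeff_single_mul, one_mul] at hst
    rw [Finset.sup_set_eq_biUnion]
    refine Set.mem_biUnion ((hx r).mem_toFinset.2 ⟨ne_zero_of_coeff_ne_zero hst, ?_⟩) ?_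
    · exact (le_sub_iff_add_le'.1 (order_le_of_coeff_ne_zero hst)).trans hsr
    · rwa [mem_support, coeff_single_mul, one_mul]
  finite_co_support' s := by
    simp only [coeff_single_mul, one_mul]
    exact finite_support_coeff_sub hx s

theorem coeff_hsum_shift {x : Γ → HahnSeries Γ R}
    (hx : ∀ r, {t | x t ≠ 0 ∧ t + (x t).order ≤ r}.Finite) (s : Γ) :
    (shift x hx).hsum.coeff s = ∑ᶠ t, (x t).coeff (s - t) := by
  simp only [coeff_hsum, shift, coe_mk, coeff_single_mul, one_mul]

end SummableFamily

end HahnSeries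

section Substitution

variable {n : ℕ}

theorem coeff_polySubst (ε : Fin n → ℝ) (f : MvP n) (s : ℝ) :
    (polySubst n ε f).coeff s = algebraMap (MvP n) (KK n)
      (∑ m ∈ f.support with ∑ i, ε i * (m i : ℝ) = s,
        MvPolynomial.monomial m (MvPolynomial.coeff m f)) := by
  simp only [polySubst, HahnSeries.coeff_sum, HahnSeries.coeff_single, map_sum,
    Finset.sum_filter]
  exact Finset.sum_congr rfl fun m _ => by split_ifs <;> simp_all [eq_comm]

theorem coeff_polySubst_ne_zero_iff (ε : Fin n → ℝ) (f : MvP n) (s : ℝ) :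
    (polySubst n ε f).coeff s ≠ 0 ↔ ∃ m ∈ f.support, ∑ i, ε i * (m i : ℝ) = s := by
  rw [coeff_polySubst, ne_eq, map_eq_zero_iff _ (IsFractionRing.injective (MvP n) (KK n))]
  constructor
  · intro h
    by_contra! hne
    rw [Finset.filter_false_of_mem hne, Finset.sum_empty] at h
    exact h rfl
  · rintro ⟨m, hm, rfl⟩ h
    have hcoeff := congrArg (MvPolynomial.coeff m) h
    simp only [MvPolynomial.coeff_sum, MvPolynomial.coeff_monomial, Finset.sum_ite_eq',
      Finset.mem_filter, hm, and_self, if_true, MvPolynomial.coeff_zero] at hcoeff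
    exact MvPolynomial.mem_support_iff.1 hm hcoeff

theorem polySubst_ne_zero (ε : Fin n → ℝ) {f : MvP n} (hf : f ≠ 0) : polySubst n ε f ≠ 0 :=
  have ⟨m, hm⟩ := MvPolynomial.support_nonempty.2 hf
  HahnSeries.ne_zero_of_coeff_ne_zero ((coeff_polySubst_ne_zero_iff ε f _).2 ⟨m, hm, rfl⟩)

theorem order_polySubst (ε : Fin n → ℝ) {f : MvP n} (hf : f ≠ 0) :
    (polySubst n ε f).order = mvValEps n ε f := by
  have hne := MvPolynomial.support_nonempty.2 hf
  obtain ⟨m₀, hm₀, hmin⟩ := Finset.exists_mem_eq_inf' hne fun m => ∑ i, ε i * (m i : ℝ)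
  rw [mvValEps, dif_pos hne, hmin]
  refine le_antisymm (HahnSeries.order_le_of_coeff_ne_zero
    ((coeff_polySubst_ne_zero_iff ε f _).2 ⟨m₀, hm₀, rfl⟩)) ?_
  obtain ⟨m, hm, hmo⟩ := (coeff_polySubst_ne_zero_iff ε f _).1
    (mt HahnSeries.coeff_order_eq_zero.1 (polySubst_ne_zero ε hf))
  rw [← hmin, ← hmo]
  exact Finset.inf'_le _ hm

theorem abs_mvValEps_le (ε : Fin n → ℝ) (f : MvP n) :
    |mvValEps n ε f| ≤ ‖ε‖ * f.totalDegree := by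
  rw [mvValEps]
  split_ifs with hne
  · obtain ⟨m, hm, hmin⟩ := Finset.exists_mem_eq_inf' hne fun m => ∑ i, ε i * (m i : ℝ)
    rw [hmin]
    calc |∑ i, ε i * (m i : ℝ)| ≤ ∑ i, ‖ε‖ * (m i : ℝ) := by
          refine (Finset.abs_sum_le_sum_abs _ _).trans (Finset.sum_le_sum fun i _ => ?_)
          rw [abs_mul, Nat.abs_cast, ← Real.norm_eq_abs]
          gcongr
          exact norm_le_pi_norm ε i
      _ = ‖ε‖ * (m.degree : ℝ) := by rw [← Finset.mul_sum, Finsupp.degree_eq_sum]; push_cast; rfl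
      _ ≤ ‖ε‖ * f.totalDegree := by gcongr; exact MvPolynomial.le_totalDegree hm
  · rw [abs_zero]
    positivity

theorem neg_norm_mul_le_mvValEps_sub (ε : Fin n → ℝ) (p q : MvP n) :
    -(‖ε‖ * (p.totalDegree + q.totalDegree)) ≤ mvValEps n ε p - mvValEps n ε q := by
  linarith [(abs_le.1 (abs_mvValEps_le ε p)).1, (abs_le.1 (abs_mvValEps_le ε q)).2]

theorem neg_norm_mul_degK_le_degEps (ε : Fin n → ℝ) (r : KK n) :
    -(‖ε‖ * degK n r) ≤ degEps n ε r := by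
  set D : ℝ := ((IsLocalization.sec (nonZeroDivisors (MvP n)) r).1.totalDegree : ℝ)
    + ((IsLocalization.sec (nonZeroDivisors (MvP n)) r).2 : MvP n).totalDegree
  have hbound : ∀ ε' : Fin n → ℝ, -(‖ε'‖ * D) ≤ degEps n ε' r :=
    fun ε' => neg_norm_mul_le_mvValEps_sub ε' _ _
  rcases eq_or_ne ε 0 with rfl | hε
  · simpa using hbound 0
  have hbdd : BddBelow {d : ℝ | ∃ ε' : Fin n → ℝ, ε' ≠ 0 ∧ d = degEps n ε' r / ‖ε'‖} := by
    refine ⟨-D, ?_⟩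
    rintro _ ⟨ε', hε', rfl⟩
    rw [le_div_iff₀ (norm_pos_iff.2 hε')]
    linarith [hbound ε']
  calc -(‖ε‖ * degK n r) = ‖ε‖ * sInf _ := by rw [degK, mul_neg, neg_neg]
    _ ≤ ‖ε‖ * (degEps n ε r / ‖ε‖) := by gcongr; exact csInf_le hbdd ⟨ε, hε, rfl⟩
    _ = degEps n ε r := mul_div_cancel₀ _ (norm_ne_zero_iff.2 hε)

theorem ratSubst_zero (ε : Fin n → ℝ) : ratSubst n ε 0 = 0 := by
  have hnum : (IsLocalization.sec (nonZeroDivisors (MvP n)) (0 : KK n)).1 = 0 :=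
    IsFractionRing.injective (MvP n) (KK n) (by rw [← IsLocalization.sec_spec, zero_mul, map_zero])
  rw [ratSubst, hnum, polySubst, MvPolynomial.support_zero, Finset.sum_empty]
  exact zero_div (G₀ := HahnSeries ℝ (KK n)) _

theorem order_ratSubst (ε : Fin n → ℝ) {r : KK n} (hr : r ≠ 0) :
    (ratSubst n ε r).order = degEps n ε r := by
  have hnum := IsLocalization.sec_fst_ne_zero (M := nonZeroDivisors (MvP n)) hr
  have hden := nonZeroDivisors.coe_ne_zero (IsLocalization.sec (nonZeroDivisors (MvP n)) r).2
  have hb := polySubst_ne_zero ε hden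
  have hmul := HahnSeries.order_mul
    (div_ne_zero (G₀ := HahnSeries ℝ (KK n)) (polySubst_ne_zero ε hnum) hb) hb
  rw [div_mul_cancel₀ _ hb, order_polySubst ε hnum, order_polySubst ε hden] at hmul
  rw [ratSubst, degEps]
  linarith

end Substitution

theorem finite_setOf_add_order_le {n : ℕ} {f : HahnSeries ℝ (KK n)} (hFin : FiniteBelow n f)
    {x : ℝ → HahnSeries ℝ (KK n)} (hx : ∀ t, x t ≠ 0 → t ∈ f.support) {δ : ℝ} (hδ : δ < 1)
    (hord : ∀ t ∈ f.support, t ≠ f.order → -(δ * (t - f.order)) ≤ (x t).order) (r : ℝ) :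
    {t | x t ≠ 0 ∧ t + (x t).order ≤ r}.Finite := by
  refine ((Set.finite_singleton f.order).union (hFin ((r - δ * f.order) / (1 - δ)))).subset ?_
  rintro t ⟨hxt, htr⟩
  by_cases hto : t = f.order
  · exact Or.inl hto
  · have ht := hx t hxt
    refine Or.inr ⟨ht, (le_div_iff₀ (sub_pos.2 hδ)).2 ?_⟩
    linarith [hord t ht hto]

theorem subst_well_defined_general (n : ℕ) (f : HahnSeries ℝ (KK n))
    (hFin : FiniteBelow n f) (C : ℝ)
    (hC : ∀ t ∈ f.support, t ≠ f.order → degK n (f.coeff t) ≤ C * (t - f.order))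
    (ε : Fin n → ℝ) (hε : ‖ε‖ * C < 1) :
    (∀ t ∈ f.support, t ≠ f.order →
        (ratSubst n ε (f.coeff t)).order + t ≥ t - ‖ε‖ * ((t - f.order) * C))
    ∧ (∀ s : ℝ,
        (Function.support fun t : ℝ => (ratSubst n ε (f.coeff t)).coeff (s - t)).Finite)
    ∧ ∃ g : HahnSeries ℝ (KK n),
        ∀ s : ℝ, g.coeff s = ∑ᶠ t : ℝ, (ratSubst n ε (f.coeff t)).coeff (s - t) := by
  set x : ℝ → HahnSeries ℝ (KK n) := fun t => ratSubst n ε (f.coeff t)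
  have hord : ∀ t ∈ f.support, t ≠ f.order → -(‖ε‖ * C * (t - f.order)) ≤ (x t).order := by
    intro t ht hto
    calc -(‖ε‖ * C * (t - f.order)) = -(‖ε‖ * (C * (t - f.order))) := by ring
      _ ≤ -(‖ε‖ * degK n (f.coeff t)) := by gcongr; exact hC t ht hto
      _ ≤ degEps n ε (f.coeff t) := neg_norm_mul_degK_le_degEps ε _
      _ = (x t).order := (order_ratSubst ε ht).symm
  have hsupp : ∀ t, x t ≠ 0 → t ∈ f.support := fun t hxt ht =>
    hxt (by simp only [x, ht, ratSubst_zero])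
  have hx := finite_setOf_add_order_le hFin hsupp hε hord
  refine ⟨fun t ht hto => by linarith [hord t ht hto], HahnSeries.finite_support_coeff_sub hx,
    (HahnSeries.SummableFamily.shift x hx).hsum, HahnSeries.SummableFamily.coeff_hsum_shift hx⟩

/-- For `f = ∑_{t ∈ T} a_t p^t ∈ R(x)` with degree-growth constant `C`, and any
`ε : Fin n → ℝ` with `‖ε‖·C < 1`: for any exponent `t ∈ T` with `t ≠ val f` one has
`val(a_t(p^ε x) p^t) ≥ t - ‖ε‖ (t - val f) C`; consequently the substituted series
`f(p^ε x)` is a well-defined element of `F(x)`: each coefficient of the re-expansion is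
a finite sum, and there is a Hahn series with exactly these coefficients. -/
theorem subst_well_defined (n : ℕ) (f : HahnSeries ℝ (KK n)) (hf : f ≠ 0)
    (hFin : FiniteBelow n f) (C : ℝ)
    (hC : ∀ t ∈ f.support, t ≠ f.order → degK n (f.coeff t) ≤ C * (t - f.order))
    (ε : Fin n → ℝ) (hε : ‖ε‖ * C < 1) :
    (∀ t ∈ f.support, t ≠ f.order →
        (ratSubst n ε (f.coeff t)).order + t ≥ t - ‖ε‖ * ((t - f.order) * C))
    ∧ (∀ s : ℝ,
        (Function.support fun t : ℝ => (ratSubst n ε (f.coeff t)).coeff (s - t)).Finite)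
    ∧ ∃ g : HahnSeries ℝ (KK n),
        ∀ s : ℝ, g.coeff s = ∑ᶠ t : ℝ, (ratSubst n ε (f.coeff t)).coeff (s - t) :=
  subst_well_defined_general n f hFin C hC ε hε
end
end

section
/- For α ∈ ℝ and x a formal variable, the series θ(x p^α; p) (expanded via the triple product) has valuation val(θ(xp^α;p)) = ½{α}({α}-1) - ½α(α-1), where {α} = α - ⌊α⌋ is the fractional part of α. -/
/-- For `α ∈ ℝ`, the series `θ(x p^α; p)` (expanded via the Jacobi triple product as
`(p;p)_∞^{-1} ∑_{n ∈ ℤ} (-x)^n p^{α n + n(n-1)/2}`, whose exponents of `p` are exactly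
the numbers `α n + n(n-1)/2`, `n ∈ ℤ`, with nonzero rational-function coefficients and
no cancellation since `val (p;p)_∞ = 0`) has valuation — the least exponent occurring —
equal to `½{α}({α}-1) - ½α(α-1)`, where `{α} = α - ⌊α⌋` is the fractional part. -/
theorem theta_valuation (α : ℝ) :
    IsLeast {v : ℝ | ∃ n : ℤ, v = α * n + n * (n - 1) / 2}
      (1 / 2 * Int.fract α * (Int.fract α - 1) - 1 / 2 * α * (α - 1)) := by
  constructor
  · refine ⟨-⌊α⌋, ?_⟩
    rw [Int.fract]
    push_cast
    ring
  · rintro v ⟨n, rfl⟩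
    have hf1 : (0:ℝ) ≤ Int.fract α := Int.fract_nonneg α
    have hf2 : Int.fract α < 1 := Int.fract_lt_one α
    have hF : Int.fract α = α - (⌊α⌋ : ℝ) := rfl
    set m : ℤ := n + ⌊α⌋ with hm
    have hn : (n : ℝ) = (m : ℝ) - (⌊α⌋ : ℝ) := by push_cast [hm]; ring
    rcases le_or_gt 1 m with h | h
    · have h1 : (1:ℝ) ≤ (m:ℝ) := by exact_mod_cast h
      rw [hn, hF]
      rw [hF] at hf1 hf2
      nlinarith [mul_nonneg (sub_nonneg.mpr h1) hf1, sq_nonneg ((m:ℝ) - 1)]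
    · have h0 : m ≤ 0 := by omega
      have h1 : (m:ℝ) ≤ 0 := by exact_mod_cast h0
      have h2 : (m:ℝ) * ((m:ℝ) + 1) ≥ 0 := by
        rcases eq_or_lt_of_le h0 with he | hl
        · simp [show m = 0 by omega]
        · have : (m:ℝ) ≤ -1 := by exact_mod_cast (by omega : m ≤ -1)
          nlinarith
      rw [hn, hF]
      rw [hF] at hf1 hf2
      nlinarith [mul_nonneg (neg_nonneg.mpr h1) (le_of_lt (sub_pos.mpr hf2))]
end

section
/- Let B ⊂ ℝ^6 × ℝ be defined by: α_i - α_j ≤ 1 for all i≠j; α_i + α_j + α_k ≥ |ζ + 1/2| - 1/2 for all i<j<k; |1/2 + ζ| ≤ 1/2; ∑_i α_i = 1. Let T be the translation group generated by the vectors (-1/2,-1/2,-1/2,1/2,1/2,1/2;1/2) and (e_i - e_{i+1}; 0) for 1≤i≤5 (the E_6 root lattice shifts). Then for every (α;ζ) with ∑_i α_i = 1, there exists a translation t ∈ T such that t(α;ζ) ∈ B. -/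
/-- The generator `(-1/2,-1/2,-1/2,1/2,1/2,1/2; 1/2)` of the `E₆` root lattice of
shifts. -/
noncomputable def gen0 : (Fin 6 → ℝ) × ℝ :=
  (fun i => if (i : ℕ) < 3 then -(1 / 2) else 1 / 2, 1 / 2)

/-- The root-difference generators `(e_i - e_{i+1}; 0)`, `1 ≤ i ≤ 5`, of the `E₆` root
lattice of shifts. -/
noncomputable def genD (i : Fin 5) : (Fin 6 → ℝ) × ℝ :=
  (fun j => if j = i.castSucc then 1 else if j = i.succ then -1 else 0, 0)

/-- The `E₆` root lattice `Λ` of translations, generated by `gen0` and the five root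
differences. -/
noncomputable def Lambda : AddSubgroup ((Fin 6 → ℝ) × ℝ) :=
  AddSubgroup.closure ({gen0} ∪ Set.range genD)

/-- bound on any triple sum given two exceptional low values -/
lemma triple_bound (h : Fin 6 → ℝ) (a b : Fin 6) (v1 v2 v3 : ℝ)
    (h13 : v1 ≤ v3) (h23 : v2 ≤ v3) (ha : v1 ≤ h a) (hb : v2 ≤ h b)
    (hr : ∀ i, v3 ≤ h i ∨ i = a ∨ i = b) :
    ∀ i j l : Fin 6, i ≠ j → i ≠ l → j ≠ l → v1 + v2 + v3 ≤ h i + h j + h l := by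
  intro i j l hij hil hjl
  rcases hr i with Hi | rfl | rfl <;> rcases hr j with Hj | rfl | rfl <;>
    rcases hr l with Hl | rfl | rfl <;>
    first
      | exact absurd rfl hij
      | exact absurd rfl hil
      | exact absurd rfl hjl
      | linarith

lemma redDiff (ψ : Fin 6 → ℝ) (hm : Monotone ψ) (hd : ∀ i j : Fin 6, ψ i - ψ j ≤ 1)
    (t : Fin 6) :
    ∀ i j : Fin 6, (ψ i - if t ≤ i then 1 else 0) - (ψ j - if t ≤ j then 1 else 0) ≤ 1 := by
  intro i j
  by_cases hi : t ≤ i <;> by_cases hj : t ≤ j <;> simp [hi, hj]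
  · linarith [hd i j]
  · linarith [hd i j]
  · have hij2 : i ≤ j := le_trans (le_of_lt (lt_of_not_ge hi)) hj
    have := hm hij2
    linarith
  · linarith [hd i j]

lemma genD_mem (j : Fin 5) : genD j ∈ Lambda :=
  AddSubgroup.subset_closure (Or.inr ⟨j, rfl⟩)

lemma gen0_mem : gen0 ∈ Lambda :=
  AddSubgroup.subset_closure (Or.inl rfl)

lemma intvec_mem (n : Fin 6 → ℤ) (hn : ∑ i, n i = 0) :
    ((fun i => (n i : ℝ)), (0:ℝ)) ∈ Lambda := by
  have key : ((fun i => (n i : ℝ)), (0:ℝ)) =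
      (n 0) • genD 0 + (n 0 + n 1) • genD 1 + (n 0 + n 1 + n 2) • genD 2 +
      (n 0 + n 1 + n 2 + n 3) • genD 3 + (n 0 + n 1 + n 2 + n 3 + n 4) • genD 4 := by
    have h5 : (n 5 : ℝ) = -(n 0) - n 1 - n 2 - n 3 - n 4 := by
      have h := hn
      rw [Fin.sum_univ_six] at h
      have h' : ((n 0 : ℝ)) + n 1 + n 2 + n 3 + n 4 + n 5 = 0 := by exact_mod_cast h
      linarith
    refine Prod.ext ?_ ?_
    · funext i
      fin_cases i <;>
        simp (config := { decide := true }) [genD, Prod.fst_add] <;>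
        first | rfl | (rw [h5]; ring) | ring | push_cast <;> ring
    · simp [genD]
  rw [key]
  exact AddSubgroup.add_mem _ (AddSubgroup.add_mem _ (AddSubgroup.add_mem _
    (AddSubgroup.add_mem _ (AddSubgroup.zsmul_mem _ (genD_mem 0) _)
      (AddSubgroup.zsmul_mem _ (genD_mem 1) _)) (AddSubgroup.zsmul_mem _ (genD_mem 2) _))
    (AddSubgroup.zsmul_mem _ (genD_mem 3) _)) (AddSubgroup.zsmul_mem _ (genD_mem 4) _)

lemma mem_lambda (u : Fin 6 → ℝ) (m : ℤ) (hint : ∀ i, ∃ n : ℤ, u i = n)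
    (hsum : ∑ i, u i = 0) :
    ((fun i => u i + (m:ℝ) * gen0.1 i, (m:ℝ)/2) : (Fin 6 → ℝ) × ℝ) ∈ Lambda := by
  choose n hn using hint
  have hns : ∑ i, n i = 0 := by
    have : ((∑ i, n i : ℤ) : ℝ) = 0 := by
      push_cast
      rw [← hsum]
      exact Finset.sum_congr rfl fun i _ => (hn i).symm
    exact_mod_cast this
  have : ((fun i => u i + (m:ℝ) * gen0.1 i, (m:ℝ)/2) : (Fin 6 → ℝ) × ℝ) =
      m • gen0 + ((fun i => (n i : ℝ)), (0:ℝ)) := by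
    refine Prod.ext ?_ ?_
    · funext i
      simp [hn i]
      ring
    · simp [gen0]
      ring
  rw [this]
  exact AddSubgroup.add_mem _ (AddSubgroup.zsmul_mem _ gen0_mem _) (intvec_mem n hns)

def Good (θ : ℝ) (base h : Fin 6 → ℝ) : Prop :=
  (∀ i, ∃ n : ℤ, h i - base i = n) ∧ (∑ i, h i = 0) ∧
  (∀ i j, h i - h j ≤ 1) ∧
  (∀ i j l : Fin 6, i ≠ j → i ≠ l → j ≠ l → -θ ≤ h i + h j + h l)

lemma mkGood (φ base : Fin 6 → ℝ) (d lo v1 v2 v3 θ : ℝ) (t : ℕ) (a b : Fin 6)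
    (hint : ∀ i : Fin 6, ∃ n : ℤ, (φ i + d - if t ≤ (i:ℕ) then 1 else 0) - base i = n)
    (hsum : ∑ i, (φ i + d - if t ≤ (i:ℕ) then 1 else 0) = 0)
    (hbd : ∀ i, lo ≤ (φ i + d - if t ≤ (i:ℕ) then 1 else 0) ∧
      (φ i + d - if t ≤ (i:ℕ) then 1 else 0) ≤ lo + 1)
    (h13 : v1 ≤ v3) (h23 : v2 ≤ v3)
    (ha : v1 ≤ φ a + d - if t ≤ (a:ℕ) then 1 else 0)
    (hb : v2 ≤ φ b + d - if t ≤ (b:ℕ) then 1 else 0)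
    (hr : ∀ i, v3 ≤ (φ i + d - if t ≤ (i:ℕ) then 1 else 0) ∨ i = a ∨ i = b)
    (hθ : -θ ≤ v1 + v2 + v3) : ∃ h, Good θ base h := by
  refine ⟨fun i => φ i + d - if t ≤ (i:ℕ) then 1 else 0, hint, hsum, fun i j => ?_,
    fun i j l hij hil hjl => ?_⟩
  · show (φ i + d - if t ≤ (i:ℕ) then 1 else 0) - (φ j + d - if t ≤ (j:ℕ) then 1 else 0) ≤ 1
    have h1 := hbd i
    have h2 := hbd j
    linarith [h1.1, h1.2, h2.1, h2.2]
  · exact le_trans hθ (triple_bound (fun i => φ i + d - if t ≤ (i:ℕ) then 1 else 0) a b v1 v2 v3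
      h13 h23 ha hb hr i j l hij hil hjl)
set_option maxHeartbeats 1000000 in
lemma FS1 (φ : Fin 6 → ℝ) (hsum : φ 0 + φ 1 + φ 2 + φ 3 + φ 4 + φ 5 = 1)
    (hm : Monotone φ) (hb : ∀ i, 0 ≤ φ i ∧ φ i < 1)
    (s : ℝ) (hs0 : 0 ≤ s) (hs1 : s < 1/2) :
    (∃ h, Good (1-s) φ h) ∨ (∃ h, Good (1/2+s) (fun i => φ i + 1/2) h) := by
  have v0 : ((0:Fin 6):ℕ) = 0 := rfl
  have v1 : ((1:Fin 6):ℕ) = 1 := rfl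
  have v2 : ((2:Fin 6):ℕ) = 2 := rfl
  have v3 : ((3:Fin 6):ℕ) = 3 := rfl
  have v4 : ((4:Fin 6):ℕ) = 4 := rfl
  have v5 : ((5:Fin 6):ℕ) = 5 := rfl
  have c01 : φ 0 ≤ φ 1 := hm (by decide)
  have c12 : φ 1 ≤ φ 2 := hm (by decide)
  have c23 : φ 2 ≤ φ 3 := hm (by decide)
  have c34 : φ 3 ≤ φ 4 := hm (by decide)
  have c45 : φ 4 ≤ φ 5 := hm (by decide)
  obtain ⟨b0, b0'⟩ := hb 0
  obtain ⟨b1, b1'⟩ := hb 1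
  obtain ⟨b2, b2'⟩ := hb 2
  obtain ⟨b3, b3'⟩ := hb 3
  obtain ⟨b4, b4'⟩ := hb 4
  obtain ⟨b5, b5'⟩ := hb 5
  by_cases hc : -(1-s) ≤ (φ 5 - 1) + (φ 0) + (φ 1)
  · left
    refine mkGood φ φ 0 (φ 5 - 1) (φ 5 - 1) (φ 0) (φ 1) (1-s) 5 5 0 ?_ ?_ ?_ (by linarith) (by linarith) ?_ ?_ ?_ ?_
    · refine fun i => ⟨if 5 ≤ (i:ℕ) then -1 else 0, ?_⟩
      try dsimp only
      split_ifs <;> push_cast <;> ring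
    · rw [Fin.sum_univ_six]
      norm_num [v0, v1, v2, v3, v4, v5]
      linarith
    · intro i
      fin_cases i
      · exact ⟨show φ 5 - 1 ≤ φ 0 + 0 - 0 by linarith, show φ 0 + 0 - 0 ≤ φ 5 - 1 + 1 by linarith⟩
      · exact ⟨show φ 5 - 1 ≤ φ 1 + 0 - 0 by linarith, show φ 1 + 0 - 0 ≤ φ 5 - 1 + 1 by linarith⟩
      · exact ⟨show φ 5 - 1 ≤ φ 2 + 0 - 0 by linarith, show φ 2 + 0 - 0 ≤ φ 5 - 1 + 1 by linarith⟩
      · exact ⟨show φ 5 - 1 ≤ φ 3 + 0 - 0 by linarith, show φ 3 + 0 - 0 ≤ φ 5 - 1 + 1 by linarith⟩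
      · exact ⟨show φ 5 - 1 ≤ φ 4 + 0 - 0 by linarith, show φ 4 + 0 - 0 ≤ φ 5 - 1 + 1 by linarith⟩
      · exact ⟨show φ 5 - 1 ≤ φ 5 + 0 - 1 by linarith, show φ 5 + 0 - 1 ≤ φ 5 - 1 + 1 by linarith⟩
    · show φ 5 - 1 ≤ φ 5 + 0 - 1; linarith
    · show φ 0 ≤ φ 0 + 0 - 0; linarith
    · intro i
      fin_cases i
      · exact Or.inr (Or.inr rfl)
      · exact Or.inl (show φ 1 ≤ φ 1 + 0 - 0 by linarith)
      · exact Or.inl (show φ 1 ≤ φ 2 + 0 - 0 by linarith)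
      · exact Or.inl (show φ 1 ≤ φ 3 + 0 - 0 by linarith)
      · exact Or.inl (show φ 1 ≤ φ 4 + 0 - 0 by linarith)
      · exact Or.inr (Or.inl rfl)
    · exact hc
  · right
    refine mkGood φ (fun i => φ i + 1/2) (1/2 : ℝ) (φ 2 - 1/2) (φ 2 - 1/2) (φ 3 - 1/2) (φ 4 - 1/2) (1/2+s) 2 2 3 ?_ ?_ ?_ (by linarith) (by linarith) ?_ ?_ ?_ ?_
    · refine fun i => ⟨if 2 ≤ (i:ℕ) then -1 else 0, ?_⟩
      try dsimp only
      split_ifs <;> push_cast <;> ring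
    · rw [Fin.sum_univ_six]
      norm_num [v0, v1, v2, v3, v4, v5]
      linarith
    · intro i
      fin_cases i
      · exact ⟨show φ 2 - 1/2 ≤ φ 0 + (1/2 : ℝ) - 0 by linarith, show φ 0 + (1/2 : ℝ) - 0 ≤ φ 2 - 1/2 + 1 by linarith⟩
      · exact ⟨show φ 2 - 1/2 ≤ φ 1 + (1/2 : ℝ) - 0 by linarith, show φ 1 + (1/2 : ℝ) - 0 ≤ φ 2 - 1/2 + 1 by linarith⟩
      · exact ⟨show φ 2 - 1/2 ≤ φ 2 + (1/2 : ℝ) - 1 by linarith, show φ 2 + (1/2 : ℝ) - 1 ≤ φ 2 - 1/2 + 1 by linarith⟩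
      · exact ⟨show φ 2 - 1/2 ≤ φ 3 + (1/2 : ℝ) - 1 by linarith, show φ 3 + (1/2 : ℝ) - 1 ≤ φ 2 - 1/2 + 1 by linarith⟩
      · exact ⟨show φ 2 - 1/2 ≤ φ 4 + (1/2 : ℝ) - 1 by linarith, show φ 4 + (1/2 : ℝ) - 1 ≤ φ 2 - 1/2 + 1 by linarith⟩
      · exact ⟨show φ 2 - 1/2 ≤ φ 5 + (1/2 : ℝ) - 1 by linarith, show φ 5 + (1/2 : ℝ) - 1 ≤ φ 2 - 1/2 + 1 by linarith⟩
    · show φ 2 - 1/2 ≤ φ 2 + (1/2 : ℝ) - 1; linarith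
    · show φ 3 - 1/2 ≤ φ 3 + (1/2 : ℝ) - 1; linarith
    · intro i
      fin_cases i
      · exact Or.inl (show φ 4 - 1/2 ≤ φ 0 + (1/2 : ℝ) - 0 by linarith)
      · exact Or.inl (show φ 4 - 1/2 ≤ φ 1 + (1/2 : ℝ) - 0 by linarith)
      · exact Or.inr (Or.inl rfl)
      · exact Or.inr (Or.inr rfl)
      · exact Or.inl (show φ 4 - 1/2 ≤ φ 4 + (1/2 : ℝ) - 1 by linarith)
      · exact Or.inl (show φ 4 - 1/2 ≤ φ 5 + (1/2 : ℝ) - 1 by linarith)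
    · push_neg at hc; linarith

set_option maxHeartbeats 1000000 in
lemma FS2 (φ : Fin 6 → ℝ) (hsum : φ 0 + φ 1 + φ 2 + φ 3 + φ 4 + φ 5 = 2)
    (hm : Monotone φ) (hb : ∀ i, 0 ≤ φ i ∧ φ i < 1)
    (s : ℝ) (hs0 : 0 ≤ s) (hs1 : s < 1/2) :
    (∃ h, Good (1-s) φ h) ∨ (∃ h, Good (1/2+s) (fun i => φ i + 1/2) h) := by
  have v0 : ((0:Fin 6):ℕ) = 0 := rfl
  have v1 : ((1:Fin 6):ℕ) = 1 := rfl
  have v2 : ((2:Fin 6):ℕ) = 2 := rfl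
  have v3 : ((3:Fin 6):ℕ) = 3 := rfl
  have v4 : ((4:Fin 6):ℕ) = 4 := rfl
  have v5 : ((5:Fin 6):ℕ) = 5 := rfl
  have c01 : φ 0 ≤ φ 1 := hm (by decide)
  have c12 : φ 1 ≤ φ 2 := hm (by decide)
  have c23 : φ 2 ≤ φ 3 := hm (by decide)
  have c34 : φ 3 ≤ φ 4 := hm (by decide)
  have c45 : φ 4 ≤ φ 5 := hm (by decide)
  obtain ⟨b0, b0'⟩ := hb 0
  obtain ⟨b1, b1'⟩ := hb 1
  obtain ⟨b2, b2'⟩ := hb 2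
  obtain ⟨b3, b3'⟩ := hb 3
  obtain ⟨b4, b4'⟩ := hb 4
  obtain ⟨b5, b5'⟩ := hb 5
  by_cases hc : -(1-s) ≤ (φ 4 - 1) + (φ 5 - 1) + (φ 0)
  · left
    refine mkGood φ φ 0 (φ 4 - 1) (φ 4 - 1) (φ 5 - 1) (φ 0) (1-s) 4 4 5 ?_ ?_ ?_ (by linarith) (by linarith) ?_ ?_ ?_ ?_
    · refine fun i => ⟨if 4 ≤ (i:ℕ) then -1 else 0, ?_⟩
      try dsimp only
      split_ifs <;> push_cast <;> ring
    · rw [Fin.sum_univ_six]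
      norm_num [v0, v1, v2, v3, v4, v5]
      linarith
    · intro i
      fin_cases i
      · exact ⟨show φ 4 - 1 ≤ φ 0 + 0 - 0 by linarith, show φ 0 + 0 - 0 ≤ φ 4 - 1 + 1 by linarith⟩
      · exact ⟨show φ 4 - 1 ≤ φ 1 + 0 - 0 by linarith, show φ 1 + 0 - 0 ≤ φ 4 - 1 + 1 by linarith⟩
      · exact ⟨show φ 4 - 1 ≤ φ 2 + 0 - 0 by linarith, show φ 2 + 0 - 0 ≤ φ 4 - 1 + 1 by linarith⟩
      · exact ⟨show φ 4 - 1 ≤ φ 3 + 0 - 0 by linarith, show φ 3 + 0 - 0 ≤ φ 4 - 1 + 1 by linarith⟩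
      · exact ⟨show φ 4 - 1 ≤ φ 4 + 0 - 1 by linarith, show φ 4 + 0 - 1 ≤ φ 4 - 1 + 1 by linarith⟩
      · exact ⟨show φ 4 - 1 ≤ φ 5 + 0 - 1 by linarith, show φ 5 + 0 - 1 ≤ φ 4 - 1 + 1 by linarith⟩
    · show φ 4 - 1 ≤ φ 4 + 0 - 1; linarith
    · show φ 5 - 1 ≤ φ 5 + 0 - 1; linarith
    · intro i
      fin_cases i
      · exact Or.inl (show φ 0 ≤ φ 0 + 0 - 0 by linarith)
      · exact Or.inl (show φ 0 ≤ φ 1 + 0 - 0 by linarith)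
      · exact Or.inl (show φ 0 ≤ φ 2 + 0 - 0 by linarith)
      · exact Or.inl (show φ 0 ≤ φ 3 + 0 - 0 by linarith)
      · exact Or.inr (Or.inl rfl)
      · exact Or.inr (Or.inr rfl)
    · exact hc
  · right
    refine mkGood φ (fun i => φ i + 1/2) (1/2 : ℝ) (φ 1 - 1/2) (φ 1 - 1/2) (φ 2 - 1/2) (φ 3 - 1/2) (1/2+s) 1 1 2 ?_ ?_ ?_ (by linarith) (by linarith) ?_ ?_ ?_ ?_
    · refine fun i => ⟨if 1 ≤ (i:ℕ) then -1 else 0, ?_⟩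
      try dsimp only
      split_ifs <;> push_cast <;> ring
    · rw [Fin.sum_univ_six]
      norm_num [v0, v1, v2, v3, v4, v5]
      linarith
    · intro i
      fin_cases i
      · exact ⟨show φ 1 - 1/2 ≤ φ 0 + (1/2 : ℝ) - 0 by linarith, show φ 0 + (1/2 : ℝ) - 0 ≤ φ 1 - 1/2 + 1 by linarith⟩
      · exact ⟨show φ 1 - 1/2 ≤ φ 1 + (1/2 : ℝ) - 1 by linarith, show φ 1 + (1/2 : ℝ) - 1 ≤ φ 1 - 1/2 + 1 by linarith⟩
      · exact ⟨show φ 1 - 1/2 ≤ φ 2 + (1/2 : ℝ) - 1 by linarith, show φ 2 + (1/2 : ℝ) - 1 ≤ φ 1 - 1/2 + 1 by linarith⟩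
      · exact ⟨show φ 1 - 1/2 ≤ φ 3 + (1/2 : ℝ) - 1 by linarith, show φ 3 + (1/2 : ℝ) - 1 ≤ φ 1 - 1/2 + 1 by linarith⟩
      · exact ⟨show φ 1 - 1/2 ≤ φ 4 + (1/2 : ℝ) - 1 by linarith, show φ 4 + (1/2 : ℝ) - 1 ≤ φ 1 - 1/2 + 1 by linarith⟩
      · exact ⟨show φ 1 - 1/2 ≤ φ 5 + (1/2 : ℝ) - 1 by linarith, show φ 5 + (1/2 : ℝ) - 1 ≤ φ 1 - 1/2 + 1 by linarith⟩
    · show φ 1 - 1/2 ≤ φ 1 + (1/2 : ℝ) - 1; linarith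
    · show φ 2 - 1/2 ≤ φ 2 + (1/2 : ℝ) - 1; linarith
    · intro i
      fin_cases i
      · exact Or.inl (show φ 3 - 1/2 ≤ φ 0 + (1/2 : ℝ) - 0 by linarith)
      · exact Or.inr (Or.inl rfl)
      · exact Or.inr (Or.inr rfl)
      · exact Or.inl (show φ 3 - 1/2 ≤ φ 3 + (1/2 : ℝ) - 1 by linarith)
      · exact Or.inl (show φ 3 - 1/2 ≤ φ 4 + (1/2 : ℝ) - 1 by linarith)
      · exact Or.inl (show φ 3 - 1/2 ≤ φ 5 + (1/2 : ℝ) - 1 by linarith)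
    · push_neg at hc; linarith

set_option maxHeartbeats 1000000 in
lemma FS3 (φ : Fin 6 → ℝ) (hsum : φ 0 + φ 1 + φ 2 + φ 3 + φ 4 + φ 5 = 3)
    (hm : Monotone φ) (hb : ∀ i, 0 ≤ φ i ∧ φ i < 1)
    (s : ℝ) (hs0 : 0 ≤ s) (hs1 : s < 1/2) :
    (∃ h, Good (1-s) φ h) ∨ (∃ h, Good (1/2+s) (fun i => φ i + 1/2) h) := by
  have v0 : ((0:Fin 6):ℕ) = 0 := rfl
  have v1 : ((1:Fin 6):ℕ) = 1 := rfl
  have v2 : ((2:Fin 6):ℕ) = 2 := rfl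
  have v3 : ((3:Fin 6):ℕ) = 3 := rfl
  have v4 : ((4:Fin 6):ℕ) = 4 := rfl
  have v5 : ((5:Fin 6):ℕ) = 5 := rfl
  have c01 : φ 0 ≤ φ 1 := hm (by decide)
  have c12 : φ 1 ≤ φ 2 := hm (by decide)
  have c23 : φ 2 ≤ φ 3 := hm (by decide)
  have c34 : φ 3 ≤ φ 4 := hm (by decide)
  have c45 : φ 4 ≤ φ 5 := hm (by decide)
  obtain ⟨b0, b0'⟩ := hb 0
  obtain ⟨b1, b1'⟩ := hb 1
  obtain ⟨b2, b2'⟩ := hb 2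
  obtain ⟨b3, b3'⟩ := hb 3
  obtain ⟨b4, b4'⟩ := hb 4
  obtain ⟨b5, b5'⟩ := hb 5
  by_cases hc : -(1-s) ≤ (φ 3 - 1) + (φ 4 - 1) + (φ 5 - 1)
  · left
    refine mkGood φ φ 0 (φ 3 - 1) (φ 3 - 1) (φ 4 - 1) (φ 5 - 1) (1-s) 3 3 4 ?_ ?_ ?_ (by linarith) (by linarith) ?_ ?_ ?_ ?_
    · refine fun i => ⟨if 3 ≤ (i:ℕ) then -1 else 0, ?_⟩
      try dsimp only
      split_ifs <;> push_cast <;> ring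
    · rw [Fin.sum_univ_six]
      norm_num [v0, v1, v2, v3, v4, v5]
      linarith
    · intro i
      fin_cases i
      · exact ⟨show φ 3 - 1 ≤ φ 0 + 0 - 0 by linarith, show φ 0 + 0 - 0 ≤ φ 3 - 1 + 1 by linarith⟩
      · exact ⟨show φ 3 - 1 ≤ φ 1 + 0 - 0 by linarith, show φ 1 + 0 - 0 ≤ φ 3 - 1 + 1 by linarith⟩
      · exact ⟨show φ 3 - 1 ≤ φ 2 + 0 - 0 by linarith, show φ 2 + 0 - 0 ≤ φ 3 - 1 + 1 by linarith⟩
      · exact ⟨show φ 3 - 1 ≤ φ 3 + 0 - 1 by linarith, show φ 3 + 0 - 1 ≤ φ 3 - 1 + 1 by linarith⟩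
      · exact ⟨show φ 3 - 1 ≤ φ 4 + 0 - 1 by linarith, show φ 4 + 0 - 1 ≤ φ 3 - 1 + 1 by linarith⟩
      · exact ⟨show φ 3 - 1 ≤ φ 5 + 0 - 1 by linarith, show φ 5 + 0 - 1 ≤ φ 3 - 1 + 1 by linarith⟩
    · show φ 3 - 1 ≤ φ 3 + 0 - 1; linarith
    · show φ 4 - 1 ≤ φ 4 + 0 - 1; linarith
    · intro i
      fin_cases i
      · exact Or.inl (show φ 5 - 1 ≤ φ 0 + 0 - 0 by linarith)
      · exact Or.inl (show φ 5 - 1 ≤ φ 1 + 0 - 0 by linarith)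
      · exact Or.inl (show φ 5 - 1 ≤ φ 2 + 0 - 0 by linarith)
      · exact Or.inr (Or.inl rfl)
      · exact Or.inr (Or.inr rfl)
      · exact Or.inl (show φ 5 - 1 ≤ φ 5 + 0 - 1 by linarith)
    · exact hc
  · right
    refine mkGood φ (fun i => φ i + 1/2) (1/2 : ℝ) (φ 0 - 1/2) (φ 0 - 1/2) (φ 1 - 1/2) (φ 2 - 1/2) (1/2+s) 0 0 1 ?_ ?_ ?_ (by linarith) (by linarith) ?_ ?_ ?_ ?_
    · refine fun i => ⟨if 0 ≤ (i:ℕ) then -1 else 0, ?_⟩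
      try dsimp only
      split_ifs <;> push_cast <;> ring
    · rw [Fin.sum_univ_six]
      norm_num [v0, v1, v2, v3, v4, v5]
      linarith
    · intro i
      fin_cases i
      · exact ⟨show φ 0 - 1/2 ≤ φ 0 + (1/2 : ℝ) - 1 by linarith, show φ 0 + (1/2 : ℝ) - 1 ≤ φ 0 - 1/2 + 1 by linarith⟩
      · exact ⟨show φ 0 - 1/2 ≤ φ 1 + (1/2 : ℝ) - 1 by linarith, show φ 1 + (1/2 : ℝ) - 1 ≤ φ 0 - 1/2 + 1 by linarith⟩
      · exact ⟨show φ 0 - 1/2 ≤ φ 2 + (1/2 : ℝ) - 1 by linarith, show φ 2 + (1/2 : ℝ) - 1 ≤ φ 0 - 1/2 + 1 by linarith⟩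
      · exact ⟨show φ 0 - 1/2 ≤ φ 3 + (1/2 : ℝ) - 1 by linarith, show φ 3 + (1/2 : ℝ) - 1 ≤ φ 0 - 1/2 + 1 by linarith⟩
      · exact ⟨show φ 0 - 1/2 ≤ φ 4 + (1/2 : ℝ) - 1 by linarith, show φ 4 + (1/2 : ℝ) - 1 ≤ φ 0 - 1/2 + 1 by linarith⟩
      · exact ⟨show φ 0 - 1/2 ≤ φ 5 + (1/2 : ℝ) - 1 by linarith, show φ 5 + (1/2 : ℝ) - 1 ≤ φ 0 - 1/2 + 1 by linarith⟩
    · show φ 0 - 1/2 ≤ φ 0 + (1/2 : ℝ) - 1; linarith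
    · show φ 1 - 1/2 ≤ φ 1 + (1/2 : ℝ) - 1; linarith
    · intro i
      fin_cases i
      · exact Or.inr (Or.inl rfl)
      · exact Or.inr (Or.inr rfl)
      · exact Or.inl (show φ 2 - 1/2 ≤ φ 2 + (1/2 : ℝ) - 1 by linarith)
      · exact Or.inl (show φ 2 - 1/2 ≤ φ 3 + (1/2 : ℝ) - 1 by linarith)
      · exact Or.inl (show φ 2 - 1/2 ≤ φ 4 + (1/2 : ℝ) - 1 by linarith)
      · exact Or.inl (show φ 2 - 1/2 ≤ φ 5 + (1/2 : ℝ) - 1 by linarith)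
    · push_neg at hc; linarith

set_option maxHeartbeats 1000000 in
lemma FS4 (φ : Fin 6 → ℝ) (hsum : φ 0 + φ 1 + φ 2 + φ 3 + φ 4 + φ 5 = 4)
    (hm : Monotone φ) (hb : ∀ i, 0 ≤ φ i ∧ φ i < 1)
    (s : ℝ) (hs0 : 0 ≤ s) (hs1 : s < 1/2) :
    (∃ h, Good (1-s) φ h) ∨ (∃ h, Good (1/2+s) (fun i => φ i + 1/2) h) := by
  have v0 : ((0:Fin 6):ℕ) = 0 := rfl
  have v1 : ((1:Fin 6):ℕ) = 1 := rfl
  have v2 : ((2:Fin 6):ℕ) = 2 := rfl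
  have v3 : ((3:Fin 6):ℕ) = 3 := rfl
  have v4 : ((4:Fin 6):ℕ) = 4 := rfl
  have v5 : ((5:Fin 6):ℕ) = 5 := rfl
  have c01 : φ 0 ≤ φ 1 := hm (by decide)
  have c12 : φ 1 ≤ φ 2 := hm (by decide)
  have c23 : φ 2 ≤ φ 3 := hm (by decide)
  have c34 : φ 3 ≤ φ 4 := hm (by decide)
  have c45 : φ 4 ≤ φ 5 := hm (by decide)
  obtain ⟨b0, b0'⟩ := hb 0
  obtain ⟨b1, b1'⟩ := hb 1
  obtain ⟨b2, b2'⟩ := hb 2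
  obtain ⟨b3, b3'⟩ := hb 3
  obtain ⟨b4, b4'⟩ := hb 4
  obtain ⟨b5, b5'⟩ := hb 5
  by_cases hc : -(1-s) ≤ (φ 2 - 1) + (φ 3 - 1) + (φ 4 - 1)
  · left
    refine mkGood φ φ 0 (φ 2 - 1) (φ 2 - 1) (φ 3 - 1) (φ 4 - 1) (1-s) 2 2 3 ?_ ?_ ?_ (by linarith) (by linarith) ?_ ?_ ?_ ?_
    · refine fun i => ⟨if 2 ≤ (i:ℕ) then -1 else 0, ?_⟩
      try dsimp only
      split_ifs <;> push_cast <;> ring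
    · rw [Fin.sum_univ_six]
      norm_num [v0, v1, v2, v3, v4, v5]
      linarith
    · intro i
      fin_cases i
      · exact ⟨show φ 2 - 1 ≤ φ 0 + 0 - 0 by linarith, show φ 0 + 0 - 0 ≤ φ 2 - 1 + 1 by linarith⟩
      · exact ⟨show φ 2 - 1 ≤ φ 1 + 0 - 0 by linarith, show φ 1 + 0 - 0 ≤ φ 2 - 1 + 1 by linarith⟩
      · exact ⟨show φ 2 - 1 ≤ φ 2 + 0 - 1 by linarith, show φ 2 + 0 - 1 ≤ φ 2 - 1 + 1 by linarith⟩
      · exact ⟨show φ 2 - 1 ≤ φ 3 + 0 - 1 by linarith, show φ 3 + 0 - 1 ≤ φ 2 - 1 + 1 by linarith⟩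
      · exact ⟨show φ 2 - 1 ≤ φ 4 + 0 - 1 by linarith, show φ 4 + 0 - 1 ≤ φ 2 - 1 + 1 by linarith⟩
      · exact ⟨show φ 2 - 1 ≤ φ 5 + 0 - 1 by linarith, show φ 5 + 0 - 1 ≤ φ 2 - 1 + 1 by linarith⟩
    · show φ 2 - 1 ≤ φ 2 + 0 - 1; linarith
    · show φ 3 - 1 ≤ φ 3 + 0 - 1; linarith
    · intro i
      fin_cases i
      · exact Or.inl (show φ 4 - 1 ≤ φ 0 + 0 - 0 by linarith)
      · exact Or.inl (show φ 4 - 1 ≤ φ 1 + 0 - 0 by linarith)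
      · exact Or.inr (Or.inl rfl)
      · exact Or.inr (Or.inr rfl)
      · exact Or.inl (show φ 4 - 1 ≤ φ 4 + 0 - 1 by linarith)
      · exact Or.inl (show φ 4 - 1 ≤ φ 5 + 0 - 1 by linarith)
    · exact hc
  · right
    refine mkGood φ (fun i => φ i + 1/2) (-(1/2) : ℝ) (φ 5 - 3/2) (φ 5 - 3/2) (φ 0 - 1/2) (φ 1 - 1/2) (1/2+s) 5 5 0 ?_ ?_ ?_ (by linarith) (by linarith) ?_ ?_ ?_ ?_
    · refine fun i => ⟨if 5 ≤ (i:ℕ) then -2 else -1, ?_⟩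
      try dsimp only
      split_ifs <;> push_cast <;> ring
    · rw [Fin.sum_univ_six]
      norm_num [v0, v1, v2, v3, v4, v5]
      linarith
    · intro i
      fin_cases i
      · exact ⟨show φ 5 - 3/2 ≤ φ 0 + (-(1/2) : ℝ) - 0 by linarith, show φ 0 + (-(1/2) : ℝ) - 0 ≤ φ 5 - 3/2 + 1 by linarith⟩
      · exact ⟨show φ 5 - 3/2 ≤ φ 1 + (-(1/2) : ℝ) - 0 by linarith, show φ 1 + (-(1/2) : ℝ) - 0 ≤ φ 5 - 3/2 + 1 by linarith⟩
      · exact ⟨show φ 5 - 3/2 ≤ φ 2 + (-(1/2) : ℝ) - 0 by linarith, show φ 2 + (-(1/2) : ℝ) - 0 ≤ φ 5 - 3/2 + 1 by linarith⟩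
      · exact ⟨show φ 5 - 3/2 ≤ φ 3 + (-(1/2) : ℝ) - 0 by linarith, show φ 3 + (-(1/2) : ℝ) - 0 ≤ φ 5 - 3/2 + 1 by linarith⟩
      · exact ⟨show φ 5 - 3/2 ≤ φ 4 + (-(1/2) : ℝ) - 0 by linarith, show φ 4 + (-(1/2) : ℝ) - 0 ≤ φ 5 - 3/2 + 1 by linarith⟩
      · exact ⟨show φ 5 - 3/2 ≤ φ 5 + (-(1/2) : ℝ) - 1 by linarith, show φ 5 + (-(1/2) : ℝ) - 1 ≤ φ 5 - 3/2 + 1 by linarith⟩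
    · show φ 5 - 3/2 ≤ φ 5 + (-(1/2) : ℝ) - 1; linarith
    · show φ 0 - 1/2 ≤ φ 0 + (-(1/2) : ℝ) - 0; linarith
    · intro i
      fin_cases i
      · exact Or.inr (Or.inr rfl)
      · exact Or.inl (show φ 1 - 1/2 ≤ φ 1 + (-(1/2) : ℝ) - 0 by linarith)
      · exact Or.inl (show φ 1 - 1/2 ≤ φ 2 + (-(1/2) : ℝ) - 0 by linarith)
      · exact Or.inl (show φ 1 - 1/2 ≤ φ 3 + (-(1/2) : ℝ) - 0 by linarith)
      · exact Or.inl (show φ 1 - 1/2 ≤ φ 4 + (-(1/2) : ℝ) - 0 by linarith)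
      · exact Or.inr (Or.inl rfl)
    · push_neg at hc; linarith

set_option maxHeartbeats 1000000 in
lemma FS5 (φ : Fin 6 → ℝ) (hsum : φ 0 + φ 1 + φ 2 + φ 3 + φ 4 + φ 5 = 5)
    (hm : Monotone φ) (hb : ∀ i, 0 ≤ φ i ∧ φ i < 1)
    (s : ℝ) (hs0 : 0 ≤ s) (hs1 : s < 1/2) :
    (∃ h, Good (1-s) φ h) ∨ (∃ h, Good (1/2+s) (fun i => φ i + 1/2) h) := by
  have v0 : ((0:Fin 6):ℕ) = 0 := rfl
  have v1 : ((1:Fin 6):ℕ) = 1 := rfl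
  have v2 : ((2:Fin 6):ℕ) = 2 := rfl
  have v3 : ((3:Fin 6):ℕ) = 3 := rfl
  have v4 : ((4:Fin 6):ℕ) = 4 := rfl
  have v5 : ((5:Fin 6):ℕ) = 5 := rfl
  have c01 : φ 0 ≤ φ 1 := hm (by decide)
  have c12 : φ 1 ≤ φ 2 := hm (by decide)
  have c23 : φ 2 ≤ φ 3 := hm (by decide)
  have c34 : φ 3 ≤ φ 4 := hm (by decide)
  have c45 : φ 4 ≤ φ 5 := hm (by decide)
  obtain ⟨b0, b0'⟩ := hb 0
  obtain ⟨b1, b1'⟩ := hb 1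
  obtain ⟨b2, b2'⟩ := hb 2
  obtain ⟨b3, b3'⟩ := hb 3
  obtain ⟨b4, b4'⟩ := hb 4
  obtain ⟨b5, b5'⟩ := hb 5
  by_cases hc : -(1-s) ≤ (φ 1 - 1) + (φ 2 - 1) + (φ 3 - 1)
  · left
    refine mkGood φ φ 0 (φ 1 - 1) (φ 1 - 1) (φ 2 - 1) (φ 3 - 1) (1-s) 1 1 2 ?_ ?_ ?_ (by linarith) (by linarith) ?_ ?_ ?_ ?_
    · refine fun i => ⟨if 1 ≤ (i:ℕ) then -1 else 0, ?_⟩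
      try dsimp only
      split_ifs <;> push_cast <;> ring
    · rw [Fin.sum_univ_six]
      norm_num [v0, v1, v2, v3, v4, v5]
      linarith
    · intro i
      fin_cases i
      · exact ⟨show φ 1 - 1 ≤ φ 0 + 0 - 0 by linarith, show φ 0 + 0 - 0 ≤ φ 1 - 1 + 1 by linarith⟩
      · exact ⟨show φ 1 - 1 ≤ φ 1 + 0 - 1 by linarith, show φ 1 + 0 - 1 ≤ φ 1 - 1 + 1 by linarith⟩
      · exact ⟨show φ 1 - 1 ≤ φ 2 + 0 - 1 by linarith, show φ 2 + 0 - 1 ≤ φ 1 - 1 + 1 by linarith⟩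
      · exact ⟨show φ 1 - 1 ≤ φ 3 + 0 - 1 by linarith, show φ 3 + 0 - 1 ≤ φ 1 - 1 + 1 by linarith⟩
      · exact ⟨show φ 1 - 1 ≤ φ 4 + 0 - 1 by linarith, show φ 4 + 0 - 1 ≤ φ 1 - 1 + 1 by linarith⟩
      · exact ⟨show φ 1 - 1 ≤ φ 5 + 0 - 1 by linarith, show φ 5 + 0 - 1 ≤ φ 1 - 1 + 1 by linarith⟩
    · show φ 1 - 1 ≤ φ 1 + 0 - 1; linarith
    · show φ 2 - 1 ≤ φ 2 + 0 - 1; linarith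
    · intro i
      fin_cases i
      · exact Or.inl (show φ 3 - 1 ≤ φ 0 + 0 - 0 by linarith)
      · exact Or.inr (Or.inl rfl)
      · exact Or.inr (Or.inr rfl)
      · exact Or.inl (show φ 3 - 1 ≤ φ 3 + 0 - 1 by linarith)
      · exact Or.inl (show φ 3 - 1 ≤ φ 4 + 0 - 1 by linarith)
      · exact Or.inl (show φ 3 - 1 ≤ φ 5 + 0 - 1 by linarith)
    · exact hc
  · right
    refine mkGood φ (fun i => φ i + 1/2) (-(1/2) : ℝ) (φ 4 - 3/2) (φ 4 - 3/2) (φ 5 - 3/2) (φ 0 - 1/2) (1/2+s) 4 4 5 ?_ ?_ ?_ (by linarith) (by linarith) ?_ ?_ ?_ ?_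
    · refine fun i => ⟨if 4 ≤ (i:ℕ) then -2 else -1, ?_⟩
      try dsimp only
      split_ifs <;> push_cast <;> ring
    · rw [Fin.sum_univ_six]
      norm_num [v0, v1, v2, v3, v4, v5]
      linarith
    · intro i
      fin_cases i
      · exact ⟨show φ 4 - 3/2 ≤ φ 0 + (-(1/2) : ℝ) - 0 by linarith, show φ 0 + (-(1/2) : ℝ) - 0 ≤ φ 4 - 3/2 + 1 by linarith⟩
      · exact ⟨show φ 4 - 3/2 ≤ φ 1 + (-(1/2) : ℝ) - 0 by linarith, show φ 1 + (-(1/2) : ℝ) - 0 ≤ φ 4 - 3/2 + 1 by linarith⟩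
      · exact ⟨show φ 4 - 3/2 ≤ φ 2 + (-(1/2) : ℝ) - 0 by linarith, show φ 2 + (-(1/2) : ℝ) - 0 ≤ φ 4 - 3/2 + 1 by linarith⟩
      · exact ⟨show φ 4 - 3/2 ≤ φ 3 + (-(1/2) : ℝ) - 0 by linarith, show φ 3 + (-(1/2) : ℝ) - 0 ≤ φ 4 - 3/2 + 1 by linarith⟩
      · exact ⟨show φ 4 - 3/2 ≤ φ 4 + (-(1/2) : ℝ) - 1 by linarith, show φ 4 + (-(1/2) : ℝ) - 1 ≤ φ 4 - 3/2 + 1 by linarith⟩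
      · exact ⟨show φ 4 - 3/2 ≤ φ 5 + (-(1/2) : ℝ) - 1 by linarith, show φ 5 + (-(1/2) : ℝ) - 1 ≤ φ 4 - 3/2 + 1 by linarith⟩
    · show φ 4 - 3/2 ≤ φ 4 + (-(1/2) : ℝ) - 1; linarith
    · show φ 5 - 3/2 ≤ φ 5 + (-(1/2) : ℝ) - 1; linarith
    · intro i
      fin_cases i
      · exact Or.inl (show φ 0 - 1/2 ≤ φ 0 + (-(1/2) : ℝ) - 0 by linarith)
      · exact Or.inl (show φ 0 - 1/2 ≤ φ 1 + (-(1/2) : ℝ) - 0 by linarith)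
      · exact Or.inl (show φ 0 - 1/2 ≤ φ 2 + (-(1/2) : ℝ) - 0 by linarith)
      · exact Or.inl (show φ 0 - 1/2 ≤ φ 3 + (-(1/2) : ℝ) - 0 by linarith)
      · exact Or.inr (Or.inl rfl)
      · exact Or.inr (Or.inr rfl)
    · push_neg at hc; linarith

lemma FS (φ : Fin 6 → ℝ) (hm : Monotone φ) (hb : ∀ i, 0 ≤ φ i ∧ φ i < 1)
    (k : ℕ) (hk : k ≤ 5) (hsum : ∑ i, φ i = (k:ℝ)) (s : ℝ) (hs0 : 0 ≤ s) (hs1 : s < 1/2) :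
    (∃ h, Good (1-s) φ h) ∨ (∃ h, Good (1/2+s) (fun i => φ i + 1/2) h) := by
  rw [Fin.sum_univ_six] at hsum
  interval_cases k
  · -- k = 0
    norm_num at hsum
    left
    refine ⟨φ, fun i => ⟨0, by push_cast; ring⟩, by rw [Fin.sum_univ_six]; linarith, ?_, ?_⟩
    · intro i j
      have := (hb i).2
      have := (hb j).1
      linarith
    · intro i j l _ _ _
      have := (hb i).1
      have := (hb j).1
      have := (hb l).1
      linarith
  · exact FS1 φ (by norm_num at hsum; linarith) hm hb s hs0 hs1
  · exact FS2 φ (by norm_num at hsum; linarith) hm hb s hs0 hs1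
  · exact FS3 φ (by norm_num at hsum; linarith) hm hb s hs0 hs1
  · exact FS4 φ (by norm_num at hsum; linarith) hm hb s hs0 hs1
  · exact FS5 φ (by norm_num at hsum; linarith) hm hb s hs0 hs1

lemma lemF (g : Fin 6 → ℝ) (hg : ∑ i, g i = 0) (s : ℝ) (hs0 : 0 ≤ s) (hs1 : s < 1/2) :
    (∃ h, Good (1-s) g h) ∨ (∃ h, Good (1/2+s) (fun i => g i + 1/2) h) := by
  set f : Fin 6 → ℝ := fun i => Int.fract (g i) with hf
  have hfb : ∀ i, 0 ≤ f i ∧ f i < 1 := fun i => ⟨Int.fract_nonneg _, Int.fract_lt_one _⟩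
  have hfg : ∀ i, f i = g i - ⌊g i⌋ := fun i => rfl
  set σ := Tuple.sort f with hσ
  have hmono : Monotone (f ∘ σ) := Tuple.monotone_sort f
  set K : ℤ := -∑ i, ⌊g i⌋ with hKdef
  have hK : ∑ i, f i = (K : ℝ) := by
    have : ∑ i, f i = ∑ i, (g i - (⌊g i⌋ : ℝ)) := Finset.sum_congr rfl fun i _ => hfg i
    rw [this, Finset.sum_sub_distrib, hg, hKdef]
    push_cast
    ring
  have hK0 : (0:ℝ) ≤ K := by
    rw [← hK]
    exact Finset.sum_nonneg fun i _ => (hfb i).1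
  have hK6 : (K:ℝ) < 6 := by
    rw [← hK]
    calc ∑ i, f i < ∑ _i : Fin 6, (1:ℝ) :=
          Finset.sum_lt_sum_of_nonempty (by simp [Finset.univ_nonempty]) fun i _ => (hfb i).2
      _ = 6 := by simp
  have hK0' : 0 ≤ K := by exact_mod_cast hK0
  have hK5 : K ≤ 5 := by
    have : K < 6 := by exact_mod_cast hK6
    omega
  set k : ℕ := K.toNat with hkdef
  have hk5 : k ≤ 5 := by omega
  have hksum : ∑ i, (f ∘ σ) i = (k:ℝ) := by
    simp only [Function.comp]
    rw [Equiv.sum_comp σ f, hK]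
    congr 1
    omega
  rcases FS (f ∘ σ) hmono (fun i => hfb (σ i)) k hk5 hksum s hs0 hs1 with
    ⟨h, hint, hsum0, hd, ht⟩ | ⟨h, hint, hsum0, hd, ht⟩
  · left
    refine ⟨h ∘ σ.symm, ?_, ?_, fun i j => hd _ _, fun i j l hij hil hjl =>
      ht _ _ _ (σ.symm.injective.ne hij) (σ.symm.injective.ne hil) (σ.symm.injective.ne hjl)⟩
    · intro i
      obtain ⟨n, hn⟩ := hint (σ.symm i)
      refine ⟨n - ⌊g i⌋, ?_⟩
      have h1 : (f ∘ σ) (σ.symm i) = f i := by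
        simp [Function.comp, Equiv.apply_symm_apply]
      rw [h1] at hn
      have h2 := hfg i
      push_cast
      simp only [Function.comp]
      linarith
    · show ∑ i, h (σ.symm i) = 0
      rw [Equiv.sum_comp σ.symm h]
      exact hsum0
  · right
    refine ⟨h ∘ σ.symm, ?_, ?_, fun i j => hd _ _, fun i j l hij hil hjl =>
      ht _ _ _ (σ.symm.injective.ne hij) (σ.symm.injective.ne hil) (σ.symm.injective.ne hjl)⟩
    · intro i
      obtain ⟨n, hn⟩ := hint (σ.symm i)
      refine ⟨n - ⌊g i⌋, ?_⟩
      have h1 : (f ∘ σ) (σ.symm i) + 1/2 = f i + 1/2 := by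
        simp [Function.comp, Equiv.apply_symm_apply]
      simp only at hn
      rw [h1] at hn
      have h2 := hfg i
      push_cast
      simp only [Function.comp]
      linarith
    · show ∑ i, h (σ.symm i) = 0
      rw [Equiv.sum_comp σ.symm h]
      exact hsum0


/-- Let `B ⊂ ℝ⁶ × ℝ` be defined by: `α_i - α_j ≤ 1` for all `i ≠ j`;
`α_i + α_j + α_k ≥ |ζ + 1/2| - 1/2` for all `i < j < k`; `|1/2 + ζ| ≤ 1/2`;
`∑ α_i = 1`.  Then for every `(α; ζ)` with `∑ α_i = 1` there is a translation
`t ∈ T` (along the `E₆` root lattice `Λ`) with `t(α; ζ) ∈ B`. -/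
theorem translate_into_B (α : Fin 6 → ℝ) (ζ : ℝ) (hsum : ∑ i, α i = 1) :
    ∃ v ∈ Lambda,
      (∀ i j : Fin 6, i ≠ j → (α i + v.1 i) - (α j + v.1 j) ≤ 1) ∧
      (∀ i j k : Fin 6, i < j → j < k →
          (α i + v.1 i) + (α j + v.1 j) + (α k + v.1 k) ≥ |(ζ + v.2) + 1 / 2| - 1 / 2) ∧
      |1 / 2 + (ζ + v.2)| ≤ 1 / 2 ∧
      (∑ i, (α i + v.1 i)) = 1 := by
  have v0 : ((0:Fin 6):ℕ) = 0 := rfl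
  have v1 : ((1:Fin 6):ℕ) = 1 := rfl
  have v2 : ((2:Fin 6):ℕ) = 2 := rfl
  have v3 : ((3:Fin 6):ℕ) = 3 := rfl
  have v4 : ((4:Fin 6):ℕ) = 4 := rfl
  have v5 : ((5:Fin 6):ℕ) = 5 := rfl
  set M : ℤ := ⌊2*ζ + 1⌋ with hM
  set s : ℝ := ζ + 1/2 - M/2 with hs_eq
  have hfl : (M:ℝ) ≤ 2*ζ + 1 := Int.floor_le _
  have hfl' : 2*ζ + 1 < M + 1 := Int.lt_floor_add_one _
  have hs0 : 0 ≤ s := by rw [hs_eq]; linarith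
  have hs1 : s < 1/2 := by rw [hs_eq]; linarith
  set g : Fin 6 → ℝ :=
    fun i => α i - (if (i:ℕ) < 3 then (-1:ℝ) else 1) * ζ - s + 1/3 -
      (if 3 ≤ (i:ℕ) then 1 - 2*s else 0) with hg_eq
  have hgsum : ∑ i, g i = 0 := by
    rw [hg_eq, Fin.sum_univ_six]
    rw [Fin.sum_univ_six] at hsum
    norm_num [v0, v1, v2, v3, v4, v5]
    linarith
  rcases lemF g hgsum s hs0 hs1 with ⟨h, hint, hsum0, hd, ht⟩ | ⟨h, hint, hsum0, hd, ht⟩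
  · -- case 1 : m = -M
    refine ⟨(fun i => (fun i => h i + 1/6 - α i - ((-M:ℤ):ℝ) * gen0.1 i) i +
        ((-M:ℤ):ℝ) * gen0.1 i, ((-M:ℤ):ℝ)/2), mem_lambda _ (-M) ?_ ?_, ?_, ?_, ?_, ?_⟩
    · -- integrality of u
      intro i
      obtain ⟨n, hn⟩ := hint i
      refine ⟨n, ?_⟩
      show h i + 1/6 - α i - ((-M:ℤ):ℝ) * gen0.1 i = n
      rw [← hn]
      by_cases hi : (i:ℕ) < 3
      · simp only [hg_eq, gen0, if_pos hi, if_neg (show ¬ 3 ≤ (i:ℕ) by omega)]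
        push_cast
        rw [hs_eq]
        ring
      · simp only [hg_eq, gen0, if_neg hi, if_pos (show 3 ≤ (i:ℕ) by omega)]
        push_cast
        rw [hs_eq]
        ring
    · -- sum of u = 0
      show ∑ i, (h i + 1/6 - α i - ((-M:ℤ):ℝ) * gen0.1 i) = 0
      rw [Fin.sum_univ_six]
      rw [Fin.sum_univ_six] at hsum0 hsum
      simp only [gen0, v0, v1, v2, v3, v4, v5]
      norm_num
      linarith
    · -- pairwise
      intro i j _
      simp only []
      linarith [hd i j]
    · -- triples
      intro i j l hij hjl
      have habs : |(ζ + ((-M:ℤ):ℝ)/2) + 1/2| = s := by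
        rw [abs_of_nonneg (by push_cast; rw [hs_eq] at hs0; linarith)]
        rw [hs_eq]
        push_cast
        ring
      have htt := ht i j l hij.ne (hij.trans hjl).ne hjl.ne
      simp only []
      rw [ge_iff_le, habs]
      ring_nf
      ring_nf at htt
      linarith [htt]
    · -- zeta bound
      have habs : |1/2 + (ζ + ((-M:ℤ):ℝ)/2)| = s := by
        rw [abs_of_nonneg (by push_cast; rw [hs_eq] at hs0; linarith)]
        rw [hs_eq]
        push_cast
        ring
      simp only []
      rw [habs]
      linarith
    · -- total sum
      simp only []
      rw [Fin.sum_univ_six]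
      rw [Fin.sum_univ_six] at hsum0
      push_cast
      linarith
  · -- case 2 : m = -M - 1
    refine ⟨(fun i => (fun i => h i + 1/6 - α i - ((-M-1:ℤ):ℝ) * gen0.1 i) i +
        ((-M-1:ℤ):ℝ) * gen0.1 i, ((-M-1:ℤ):ℝ)/2), mem_lambda _ (-M-1) ?_ ?_, ?_, ?_, ?_, ?_⟩
    · -- integrality of u
      intro i
      obtain ⟨n, hn⟩ := hint i
      simp only [] at hn
      refine ⟨n + if 3 ≤ (i:ℕ) then 1 else 0, ?_⟩
      show h i + 1/6 - α i - ((-M-1:ℤ):ℝ) * gen0.1 i = _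
      by_cases hi : (i:ℕ) < 3
      · have hgi : g i = α i - (-1) * ζ - s + 1/3 - 0 := by
          rw [hg_eq]
          simp only [if_pos hi, if_neg (show ¬ 3 ≤ (i:ℕ) by omega)]
        simp only [gen0, if_pos hi, if_neg (show ¬ 3 ≤ (i:ℕ) by omega)]
        push_cast
        rw [hs_eq] at hgi
        linarith [hn, hgi]
      · have hgi : g i = α i - 1 * ζ - s + 1/3 - (1 - 2*s) := by
          rw [hg_eq]
          simp only [if_neg hi, if_pos (show 3 ≤ (i:ℕ) by omega)]
        simp only [gen0, if_neg hi, if_pos (show 3 ≤ (i:ℕ) by omega)]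
        push_cast
        rw [hs_eq] at hgi
        linarith [hn, hgi]
    · -- sum of u = 0
      show ∑ i, (h i + 1/6 - α i - ((-M-1:ℤ):ℝ) * gen0.1 i) = 0
      rw [Fin.sum_univ_six]
      rw [Fin.sum_univ_six] at hsum0 hsum
      simp only [gen0, v0, v1, v2, v3, v4, v5]
      norm_num
      linarith
    · -- pairwise
      intro i j _
      simp only []
      linarith [hd i j]
    · -- triples
      intro i j l hij hjl
      have habs : |(ζ + ((-M-1:ℤ):ℝ)/2) + 1/2| = 1/2 - s := by
        rw [abs_of_nonpos (by push_cast; rw [hs_eq] at hs1; linarith)]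
        rw [hs_eq]
        push_cast
        ring
      have htt := ht i j l hij.ne (hij.trans hjl).ne hjl.ne
      simp only []
      rw [ge_iff_le, habs]
      ring_nf
      ring_nf at htt
      linarith [htt]
    · -- zeta bound
      have habs : |1/2 + (ζ + ((-M-1:ℤ):ℝ)/2)| = 1/2 - s := by
        rw [abs_of_nonpos (by push_cast; rw [hs_eq] at hs1; linarith)]
        rw [hs_eq]
        push_cast
        ring
      simp only []
      rw [habs]
      linarith
    · -- total sum
      simp only []
      rw [Fin.sum_univ_six]
      rw [Fin.sum_univ_six] at hsum0
      push_cast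
      linarith
end

section
/- Let P ⊂ {(α;ζ) ∈ ℝ^6 × ℝ : ∑α_i = 1} be defined by the inequalities |1/2+ζ| ≤ 1/2, |1/2+ζ| - 1/2 ≤ α_i, α_i ≤ 1 + α_j, α_i + α_j ≤ 1, and 3/2 ≥ α_i + α_j + α_k + |1/2+ζ| (for all applicable distinct indices). Let G be the group generated by the E_6-root-lattice translations (generated by (-1/2,-1/2,-1/2,1/2,1/2,1/2;1/2) and (e_i - e_{i+1};0), i=0..4) and the flip (α;ζ) ↦ (-α_0,-α_1,1-α_2,1-α_3,-α_4,-α_5;ζ). Then for any (α;ζ) with ∑_i α_i = 1, there exists g ∈ G with g(α;ζ) ∈ P. -/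
/-- The flip `(α; ζ) ↦ (-α₀, -α₁, 1-α₂, 1-α₃, -α₄, -α₅; ζ)`. -/
noncomputable def flipMap : (Fin 6 → ℝ) × ℝ → (Fin 6 → ℝ) × ℝ :=
  fun v => (fun i => if (i : ℕ) = 2 ∨ (i : ℕ) = 3 then 1 - v.1 i else -v.1 i, v.2)

theorem flipMap_involutive : Function.Involutive flipMap := by
  intro v
  unfold flipMap
  refine Prod.ext ?_ rfl
  funext i
  dsimp only
  split_ifs <;> ring

/-- The flip as a permutation of `ℝ⁶ × ℝ`. -/
noncomputable def flipPerm : Equiv.Perm ((Fin 6 → ℝ) × ℝ) :=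
  flipMap_involutive.toPerm _

/-- A translation, as a permutation of `ℝ⁶ × ℝ`. -/
noncomputable def transPerm (v : (Fin 6 → ℝ) × ℝ) : Equiv.Perm ((Fin 6 → ℝ) × ℝ) :=
  Equiv.addRight v

/-- The group `G` generated by the `E₆` root-lattice translations and the flip. -/
noncomputable def Ggroup : Subgroup (Equiv.Perm ((Fin 6 → ℝ) × ℝ)) :=
  Subgroup.closure ({flipPerm, transPerm gen0} ∪ Set.range fun i => transPerm (genD i))

/-- Membership in the polytope `P`: `|1/2 + ζ| ≤ 1/2`; `|1/2 + ζ| - 1/2 ≤ α_i`;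
`α_i ≤ 1 + α_j` and `α_i + α_j ≤ 1` for `i ≠ j`;
`3/2 ≥ α_i + α_j + α_k + |1/2 + ζ|` for distinct `i, j, k`; and `∑ α_i = 1`. -/
def memP (v : (Fin 6 → ℝ) × ℝ) : Prop :=
  |1 / 2 + v.2| ≤ 1 / 2 ∧
  (∀ i, |1 / 2 + v.2| - 1 / 2 ≤ v.1 i) ∧
  (∀ i j, i ≠ j → v.1 i ≤ 1 + v.1 j) ∧
  (∀ i j, i ≠ j → v.1 i + v.1 j ≤ 1) ∧
  (∀ i j k, i ≠ j → i ≠ k → j ≠ k → 3 / 2 ≥ v.1 i + v.1 j + v.1 k + |1 / 2 + v.2|) ∧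
  (∑ i, v.1 i) = 1

open Set

lemma transPerm_add (a b : (Fin 6 → ℝ) × ℝ) :
    transPerm (a + b) = transPerm b * transPerm a :=
  Equiv.addRight_add a b

lemma flipPerm_mem_Ggroup : flipPerm ∈ Ggroup :=
  Subgroup.subset_closure (Or.inl (Or.inl rfl))

def transLattice : AddSubgroup ((Fin 6 → ℝ) × ℝ) where
  carrier := {v | transPerm v ∈ Ggroup}
  add_mem' {a b} (ha : transPerm a ∈ Ggroup) (hb : transPerm b ∈ Ggroup) := by
    simp [transPerm_add, mul_mem hb ha]
  zero_mem' := by simp [transPerm, one_mem]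
  neg_mem' {a} (ha : transPerm a ∈ Ggroup) := by simpa [transPerm] using inv_mem ha

lemma gen0_mem_transLattice : gen0 ∈ transLattice :=
  Subgroup.subset_closure (Or.inl (Or.inr rfl))

lemma genD_mem_transLattice (i : Fin 5) : genD i ∈ transLattice :=
  Subgroup.subset_closure (Or.inr ⟨i, rfl⟩)

def rootVec (a b : Fin 6) : (Fin 6 → ℝ) × ℝ := (Pi.single a 1 - Pi.single b 1, 0)

lemma genD_eq_rootVec (i : Fin 5) : genD i = rootVec i.castSucc i.succ := by
  have hne : i.succ ≠ i.castSucc := (Fin.castSucc_lt_succ (i := i)).ne'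
  ext j
  · simp only [genD, rootVec, Pi.sub_apply, Pi.single_apply]
    split_ifs <;> simp_all
  · rfl

lemma rootVec_mem_transLattice (a b : Fin 6) : rootVec a b ∈ transLattice := by
  have hzero : ∀ a, rootVec 0 a ∈ transLattice := by
    refine Fin.induction (by simp only [rootVec, sub_self, Prod.mk_zero_zero, zero_mem])
      fun i hi => ?_
    convert add_mem hi (genD_mem_transLattice i) using 1
    rw [genD_eq_rootVec]
    ext <;> simp [rootVec]
  convert sub_mem (hzero b) (hzero a) using 1
  ext <;> simp [rootVec]

lemma gen0_eq : gen0 = ((2⁻¹ : ℝ) • 1 - (Pi.single 0 1 + Pi.single 1 1 + Pi.single 2 1), 2⁻¹) := by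
  ext l
  · fin_cases l <;> norm_num [gen0, Pi.single_apply, Fin.ext_iff]
  · norm_num [gen0]

lemma zeta_mem_transLattice : ((0 : Fin 6 → ℝ), (1 : ℝ)) ∈ transLattice := by
  convert add_mem (add_mem (add_mem gen0_mem_transLattice gen0_mem_transLattice)
    (rootVec_mem_transLattice 0 3)) (add_mem (rootVec_mem_transLattice 1 4)
    (rootVec_mem_transLattice 2 5)) using 1
  ext l
  · fin_cases l <;> norm_num [gen0, rootVec, Pi.single_apply, Fin.ext_iff]
  · norm_num [gen0, rootVec]

def flipShift : Fin 6 → ℝ := Pi.single 2 1 + Pi.single 3 1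

lemma flipMap_eq (p : (Fin 6 → ℝ) × ℝ) : flipMap p = (flipShift - p.1, p.2) := by
  ext l
  · fin_cases l <;> simp [flipMap, flipShift]
  · rfl

lemma mk_sub_one_mem {w : Fin 6 → ℝ} {t : ℝ} (h : (w, t) ∈ transLattice) :
    (w, t - 1) ∈ transLattice := by
  simpa using sub_mem h zeta_mem_transLattice

noncomputable def energy (p : (Fin 6 → ℝ) × ℝ) : ℝ := p.1 ⬝ᵥ p.1 + 2 * (p.2 + 1 / 2) ^ 2

def IsMinimalInOrbit (p : (Fin 6 → ℝ) × ℝ) : Prop :=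
  ∀ g ∈ Ggroup, energy p ≤ energy (g p)

namespace IsMinimalInOrbit

variable {p : (Fin 6 → ℝ) × ℝ}

lemma neg_two_mul_dotProduct_le (hp : IsMinimalInOrbit p) {w : Fin 6 → ℝ} {t : ℝ}
    (hw : (w, t) ∈ transLattice) :
    -2 * (w ⬝ᵥ p.1) ≤ w ⬝ᵥ w + 4 * t * (p.2 + 1 / 2) + 2 * t ^ 2 := by
  have h := hp _ hw
  simp only [transPerm, Equiv.coe_addRight, energy, Prod.fst_add, Prod.snd_add, add_dotProduct,
    dotProduct_add, dotProduct_comm p.1 w] at h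
  linarith

-- The flip followed by the translation by `(w - flipShift, t)` sends `p` to `(w - p.1, p.2 + t)`.
lemma two_mul_dotProduct_le (hp : IsMinimalInOrbit p) {w : Fin 6 → ℝ} {t : ℝ}
    (hw : (w - flipShift, t) ∈ transLattice) :
    2 * (w ⬝ᵥ p.1) ≤ w ⬝ᵥ w + 4 * t * (p.2 + 1 / 2) + 2 * t ^ 2 := by
  have h := hp _ (mul_mem hw flipPerm_mem_Ggroup)
  simp only [Equiv.Perm.mul_apply, transPerm, Equiv.coe_addRight, flipPerm,
    Function.Involutive.coe_toPerm, flipMap_eq, energy, Prod.mk_add_mk,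
    sub_add_sub_cancel', sub_dotProduct, dotProduct_sub, dotProduct_comm p.1 w] at h
  linarith

lemma abs_le_half (hp : IsMinimalInOrbit p) : |1 / 2 + p.2| ≤ 1 / 2 := by
  have hup := hp.neg_two_mul_dotProduct_le zeta_mem_transLattice
  have hdown := hp.neg_two_mul_dotProduct_le (mk_sub_one_mem (zero_mem transLattice))
  simp only [zero_dotProduct] at hup hdown
  rw [abs_le]
  constructor <;> linarith

lemma le_one_add (hp : IsMinimalInOrbit p) {i j : Fin 6} (hij : i ≠ j) : p.1 i ≤ 1 + p.1 j := by
  set w : Fin 6 → ℝ := Pi.single j 1 - Pi.single i 1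
  have h := hp.neg_two_mul_dotProduct_le (w := w) (t := 0) (rootVec_mem_transLattice j i)
  have hwp : w ⬝ᵥ p.1 = p.1 j - p.1 i := by simp [w, sub_dotProduct]
  have hww : w ⬝ᵥ w = 2 := by norm_num [w, hij, hij.symm]
  rw [hwp, hww] at h
  linarith

lemma add_le_one (hp : IsMinimalInOrbit p) {i j : Fin 6} (hij : i ≠ j) : p.1 i + p.1 j ≤ 1 := by
  set w : Fin 6 → ℝ := Pi.single i 1 + Pi.single j 1
  have hmem : (w - flipShift, (0 : ℝ)) ∈ transLattice := by
    convert add_mem (rootVec_mem_transLattice i 2) (rootVec_mem_transLattice j 3) using 1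
    simp only [w, rootVec, flipShift, Prod.mk_add_mk, add_zero, Prod.mk.injEq, and_true]
    abel
  have h := hp.two_mul_dotProduct_le hmem
  have hwp : w ⬝ᵥ p.1 = p.1 i + p.1 j := by simp [w, add_dotProduct]
  have hww : w ⬝ᵥ w = 2 := by norm_num [w, hij, hij.symm]
  rw [hwp, hww] at h
  linarith

lemma abs_sub_half_le (hp : IsMinimalInOrbit p) (hsum : ∑ l, p.1 l = 1) (j : Fin 6) :
    |1 / 2 + p.2| - 1 / 2 ≤ p.1 j := by
  set w : Fin 6 → ℝ := (2⁻¹ : ℝ) • 1 - Pi.single j 1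
  have hmem : (w - flipShift, (2⁻¹ : ℝ)) ∈ transLattice := by
    convert add_mem (add_mem gen0_mem_transLattice (rootVec_mem_transLattice 0 j))
      (rootVec_mem_transLattice 1 3) using 1
    rw [gen0_eq]
    simp only [w, rootVec, flipShift, Prod.mk_add_mk, add_zero, Prod.mk.injEq, and_true]
    abel
  have hup := hp.two_mul_dotProduct_le hmem
  have hdown := hp.two_mul_dotProduct_le (mk_sub_one_mem hmem)
  have hwp : w ⬝ᵥ p.1 = 2⁻¹ - p.1 j := by simp [w, sub_dotProduct, one_dotProduct, hsum]
  have hww : w ⬝ᵥ w = 3 / 2 := by norm_num [w, dotProduct_sub, dotProduct_one]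
  rw [hwp, hww] at hup hdown
  rw [sub_le_iff_le_add, abs_le]
  constructor <;> linarith

lemma add_add_add_abs_le (hp : IsMinimalInOrbit p) (hsum : ∑ l, p.1 l = 1) {i j k : Fin 6}
    (hij : i ≠ j) (hik : i ≠ k) (hjk : j ≠ k) :
    3 / 2 ≥ p.1 i + p.1 j + p.1 k + |1 / 2 + p.2| := by
  set w : Fin 6 → ℝ := (2⁻¹ : ℝ) • 1 - (Pi.single i 1 + Pi.single j 1 + Pi.single k 1)
  have hmem : (w, (2⁻¹ : ℝ)) ∈ transLattice := by
    convert add_mem (add_mem (add_mem gen0_mem_transLattice (rootVec_mem_transLattice 0 i))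
      (rootVec_mem_transLattice 1 j)) (rootVec_mem_transLattice 2 k) using 1
    rw [gen0_eq]
    simp only [w, rootVec, Prod.mk_add_mk, add_zero, Prod.mk.injEq, and_true]
    abel
  have hup := hp.neg_two_mul_dotProduct_le hmem
  have hdown := hp.neg_two_mul_dotProduct_le (mk_sub_one_mem hmem)
  have hwp : w ⬝ᵥ p.1 = 2⁻¹ - (p.1 i + p.1 j + p.1 k) := by
    simp [w, sub_dotProduct, add_dotProduct, one_dotProduct, hsum]
  have hww : w ⬝ᵥ w = 3 / 2 := by
    norm_num [w, dotProduct_sub, dotProduct_add, dotProduct_one, Finset.sum_add_distrib, hij, hik,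
      hjk, hij.symm, hik.symm, hjk.symm]
  rw [hwp, hww] at hup hdown
  rw [ge_iff_le, ← le_sub_iff_add_le', abs_le]
  constructor <;> linarith

lemma memP (hp : IsMinimalInOrbit p) (hsum : ∑ l, p.1 l = 1) : memP p :=
  ⟨hp.abs_le_half, hp.abs_sub_half_le hsum, fun _ _ => hp.le_one_add, fun _ _ => hp.add_le_one,
    fun _ _ _ => hp.add_add_add_abs_le hsum, hsum⟩

end IsMinimalInOrbit

local notation "½ℤ" => AddSubgroup.zmultiples (1 / 2 : ℝ)

lemma finite_Icc_sub_mem_zmultiples_half (a lo hi : ℝ) :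
    {x | x ∈ Icc lo hi ∧ x - a ∈ ½ℤ}.Finite := by
  have hfin : (Icc (lo - a) (hi - a) ∩ (½ℤ : Set ℝ)).Finite :=
    have : DiscreteTopology (½ℤ : Set ℝ) := inferInstanceAs (DiscreteTopology ½ℤ)
    Metric.finite_isBounded_inter_isClosed DiscreteTopology.isDiscrete (Metric.isBounded_Icc _ _)
      AddSubgroup.isClosed_of_discrete
  refine (hfin.image (· + a)).subset fun x ⟨⟨hlo, hhi⟩, hx⟩ => ⟨x - a, ⟨⟨?_, ?_⟩, hx⟩, ?_⟩
  all_goals linarith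

noncomputable def halfIntVecs : AddSubgroup ((Fin 6 → ℝ) × ℝ) where
  carrier := {v | (∀ l, v.1 l ∈ ½ℤ) ∧ v.2 ∈ ½ℤ ∧ ∑ l, v.1 l = 0}
  add_mem' := fun ⟨ha1, ha2, ha3⟩ ⟨hb1, hb2, hb3⟩ =>
    ⟨fun l => add_mem (ha1 l) (hb1 l), add_mem ha2 hb2, by simp [Finset.sum_add_distrib, ha3, hb3]⟩
  zero_mem' := ⟨fun _ => zero_mem _, zero_mem _, by simp⟩
  neg_mem' := fun ⟨ha1, ha2, ha3⟩ => ⟨fun l => neg_mem (ha1 l), neg_mem ha2, by simp [ha3]⟩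

def orbitHull (α : Fin 6 → ℝ) (ζ : ℝ) : Set ((Fin 6 → ℝ) × ℝ) :=
  {p | (∀ l, p.1 l - α l ∈ ½ℤ ∨ p.1 l + α l ∈ ½ℤ) ∧ p.2 - ζ ∈ ½ℤ ∧
    ∑ l, p.1 l = 1}

lemma mapsTo_of_mem_Ggroup {S : Set ((Fin 6 → ℝ) × ℝ)} (W : AddSubgroup ((Fin 6 → ℝ) × ℝ))
    (hgen0 : gen0 ∈ W) (hgenD : ∀ i, genD i ∈ W) (hW : ∀ v ∈ W, MapsTo (· + v) S S)
    (hflip : MapsTo flipMap S S) {g : Equiv.Perm ((Fin 6 → ℝ) × ℝ)} (hg : g ∈ Ggroup) :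
    MapsTo g S S := by
  induction hg using Subgroup.closure_induction'' with
  | mem g hg =>
    rcases hg with (rfl | rfl) | ⟨i, rfl⟩
    exacts [hflip, hW _ hgen0, hW _ (hgenD i)]
  | inv_mem g hg =>
    rcases hg with (rfl | rfl) | ⟨i, rfl⟩
    · exact hflip
    · simpa [transPerm] using hW _ (neg_mem hgen0)
    · simpa [transPerm] using hW _ (neg_mem (hgenD i))
  | one => exact mapsTo_id S
  | mul g h _ _ hg hh => exact hg.comp hh

lemma single_mem_zmultiples_half (a l : Fin 6) : (Pi.single a 1 : Fin 6 → ℝ) l ∈ ½ℤ := by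
  rw [Pi.single_apply]
  split_ifs
  exacts [AddSubgroup.mem_zmultiples_iff.2 ⟨2, by norm_num⟩, zero_mem _]

lemma rootVec_mem_halfIntVecs (a b : Fin 6) : rootVec a b ∈ halfIntVecs :=
  ⟨fun l => sub_mem (single_mem_zmultiples_half a l) (single_mem_zmultiples_half b l), zero_mem _,
    by simp [rootVec, Finset.sum_sub_distrib]⟩

lemma gen0_mem_halfIntVecs : gen0 ∈ halfIntVecs := by
  have half_mem : (1 / 2 : ℝ) ∈ ½ℤ := AddSubgroup.mem_zmultiples _
  refine ⟨fun l => ?_, half_mem, ?_⟩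
  · dsimp only [gen0]
    split_ifs
    exacts [neg_mem half_mem, half_mem]
  · simp [gen0, Fin.sum_univ_six]

lemma mapsTo_orbitHull (α : Fin 6 → ℝ) (ζ : ℝ) {g : Equiv.Perm ((Fin 6 → ℝ) × ℝ)}
    (hg : g ∈ Ggroup) : MapsTo g (orbitHull α ζ) (orbitHull α ζ) := by
  refine mapsTo_of_mem_Ggroup halfIntVecs gen0_mem_halfIntVecs
    (fun i => genD_eq_rootVec i ▸ rootVec_mem_halfIntVecs _ _) ?_ ?_ hg
  · rintro v ⟨hv, hvζ, hvsum⟩ p ⟨hp, hpζ, hpsum⟩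
    refine ⟨fun l => ?_, ?_, ?_⟩
    · rcases hp l with h | h
      · exact Or.inl (by simpa [add_sub_right_comm] using add_mem h (hv l))
      · exact Or.inr (by simpa [add_right_comm] using add_mem h (hv l))
    · simpa [add_sub_right_comm] using add_mem hpζ hvζ
    · simp [Finset.sum_add_distrib, hpsum, hvsum]
  · rintro p ⟨hp, hpζ, hpsum⟩
    have hshift (l) : flipShift l ∈ ½ℤ :=
      add_mem (single_mem_zmultiples_half 2 l) (single_mem_zmultiples_half 3 l)
    refine ⟨fun l => ?_, by simpa [flipMap_eq] using hpζ, ?_⟩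
    · rcases hp l with h | h
      · exact Or.inr (by simpa [flipMap_eq, sub_add] using sub_mem (hshift l) h)
      · exact Or.inl (by simpa [flipMap_eq, sub_sub] using sub_mem (hshift l) h)
    · simp [flipMap_eq, flipShift, Finset.sum_sub_distrib, Finset.sum_add_distrib, hpsum]

lemma sq_le_energy (p : (Fin 6 → ℝ) × ℝ) (l : Fin 6) : p.1 l ^ 2 ≤ energy p := by
  have : p.1 l ^ 2 ≤ p.1 ⬝ᵥ p.1 := by
    simpa [sq, dotProduct] using
      Finset.single_le_sum (fun m _ => mul_self_nonneg (p.1 m)) (Finset.mem_univ l)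
  unfold energy
  nlinarith

lemma sq_add_half_le_energy (p : (Fin 6 → ℝ) × ℝ) : (p.2 + 1 / 2) ^ 2 ≤ energy p := by
  have : 0 ≤ p.1 ⬝ᵥ p.1 := Finset.sum_nonneg fun m _ => mul_self_nonneg (p.1 m)
  unfold energy
  nlinarith

lemma finite_orbitHull_energy_le (α : Fin 6 → ℝ) (ζ B : ℝ) :
    {p | p ∈ orbitHull α ζ ∧ energy p ≤ B}.Finite := by
  refine ((Set.Finite.pi fun l => (finite_Icc_sub_mem_zmultiples_half (α l) (-√B) √B).union
    (finite_Icc_sub_mem_zmultiples_half (-α l) (-√B) √B)).prod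
    (finite_Icc_sub_mem_zmultiples_half ζ (-√B - 1 / 2) (√B - 1 / 2))).subset ?_
  rintro p ⟨⟨hp, hpζ, -⟩, hB⟩
  refine ⟨fun l _ => ?_, ?_, hpζ⟩
  · have hl := abs_le.1 (Real.abs_le_sqrt ((sq_le_energy p l).trans hB))
    rcases hp l with h | h
    · exact Or.inl ⟨hl, h⟩
    · exact Or.inr ⟨hl, by simpa using h⟩
  · have hζ := abs_le.1 (Real.abs_le_sqrt ((sq_add_half_le_energy p).trans hB))
    constructor <;> linarith

lemma exists_isMinimalInOrbit {α : Fin 6 → ℝ} {ζ : ℝ} {x : (Fin 6 → ℝ) × ℝ}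
    (hx : x ∈ orbitHull α ζ) : ∃ g ∈ Ggroup, IsMinimalInOrbit (g x) := by
  have hfin : {p | (∃ g ∈ Ggroup, g x = p) ∧ energy p ≤ energy x}.Finite :=
    (finite_orbitHull_energy_le α ζ _).subset fun p ⟨⟨g, hg, hgp⟩, hp⟩ =>
      ⟨hgp ▸ mapsTo_orbitHull α ζ hg hx, hp⟩
  obtain ⟨_, ⟨⟨g, hg, rfl⟩, hgx⟩, hmin⟩ :=
    Set.exists_min_image _ energy hfin ⟨x, ⟨1, one_mem _, rfl⟩, le_rfl⟩
  refine ⟨g, hg, fun h hh => ?_⟩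
  rcases le_or_gt (energy (h (g x))) (energy x) with hle | hlt
  · exact hmin _ ⟨⟨h * g, mul_mem hh hg, rfl⟩, hle⟩
  · exact hgx.trans hlt.le

/-- For any `(α; ζ)` with `∑ α_i = 1`, there exists `g ∈ G` (the group generated by the
`E₆` root-lattice translations and the flip) with `g(α; ζ) ∈ P`. -/
theorem map_into_P (α : Fin 6 → ℝ) (ζ : ℝ) (hsum : ∑ i, α i = 1) :
    ∃ g ∈ Ggroup, memP (g (α, ζ)) := by
  have hx : (α, ζ) ∈ orbitHull α ζ := ⟨fun l => Or.inl (by simp), by simp, hsum⟩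
  obtain ⟨g, hg, hmin⟩ := exists_isMinimalInOrbit hx
  exact ⟨g, hg, hmin.memP (mapsTo_orbitHull α ζ hg hx).2.2⟩
end
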